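/- arXiv:1407.0169 — 6 statements merged into one kernel-verified Lean document; each statement's English description precedes it below -/
import Mathlib

section
/- Let q be a prime power, ℓ, m, n1 positive integers, and let M1 be a minimal linear finite transducer over F_q with structural parameters ℓ, m, n1. Let n2 ≥ n1 and let r = rank(Δ_{M1}). Then the number of linear finite transducers M ∈ L_{ℓ,m,n2} with M ∼ M1 is ∏_{i=0}^{r−1}(q^{n2} − q^i) · q^{(n2+ℓ)(n2−r)}. -/
/-- Extension of the state transition function of a finite transducer to finite words. -/
def deltaStar {X S : Type*} (δ : S → X → S) : S → List X → S
  | s, [] => s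
  | s, a :: w => deltaStar δ (δ s a) w

/-- Extension of the output function of a finite transducer to finite words. -/
def lambdaStar {X Y S : Type*} (δ : S → X → S) (lam : S → X → Y) : S → List X → List Y
  | _, [] => []
  | s, a :: w => lam s a :: lambdaStar δ lam (δ s a) w

/-- A linear finite transducer over `F` with structural parameters `ℓ, m, n`, identified
with its quadruple of structural matrices `(A, B, C, D)`; its input alphabet is `F^ℓ`,
its output alphabet is `F^m` and its state space is `F^n`. -/
structure LFT (F : Type) [Field F] (ℓ m n : ℕ) where
  A : Matrix (Fin n) (Fin n) F
  B : Matrix (Fin n) (Fin ℓ) F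
  C : Matrix (Fin m) (Fin n) F
  D : Matrix (Fin m) (Fin ℓ) F

namespace LFT

variable {F : Type} [Field F] {ℓ m n n₁ n₂ : ℕ}

/-- The state transition function `δ(s, x) = As + Bx` of a linear finite transducer. -/
def del (M : LFT F ℓ m n) (s : Fin n → F) (x : Fin ℓ → F) : Fin n → F :=
  M.A.mulVec s + M.B.mulVec x

/-- The output function `λ(s, x) = Cs + Dx` of a linear finite transducer. -/
def out (M : LFT F ℓ m n) (s : Fin n → F) (x : Fin ℓ → F) : Fin m → F :=
  M.C.mulVec s + M.D.mulVec x

/-- Two states are equivalent when the transducers produce the same output word from them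
on every finite input word. -/
def StateEquiv (M₁ : LFT F ℓ m n₁) (M₂ : LFT F ℓ m n₂)
    (s₁ : Fin n₁ → F) (s₂ : Fin n₂ → F) : Prop :=
  ∀ α : List (Fin ℓ → F), lambdaStar M₁.del M₁.out s₁ α = lambdaStar M₂.del M₂.out s₂ α

/-- Two linear finite transducers are equivalent if every state of each one is equivalent
to some state of the other. -/
def Equiv (M₁ : LFT F ℓ m n₁) (M₂ : LFT F ℓ m n₂) : Prop :=
  (∀ s₁, ∃ s₂, StateEquiv M₁ M₂ s₁ s₂) ∧ (∀ s₂, ∃ s₁, StateEquiv M₁ M₂ s₁ s₂)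

/-- A linear finite transducer is minimal if it has no pair of distinct equivalent states. -/
def Minimal (M : LFT F ℓ m n) : Prop :=
  ∀ s s' : Fin n → F, StateEquiv M M s s' → s = s'

/-- The diagnostic matrix `Δ_M = [C; CA; …; CA^{n−1}]` of a linear finite transducer,
with the `mn` rows indexed by `Fin (n * m)` (row `i` is row `i % m` of `C * A ^ (i / m)`). -/
def diagMat (M : LFT F ℓ m n) : Matrix (Fin (n * m)) (Fin n) F :=
  Matrix.of fun i j =>
    (M.C * M.A ^ ((i : ℕ) / m))
      ⟨(i : ℕ) % m, Nat.mod_lt _ (Nat.pos_of_ne_zero fun h => by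
        have hpos : 0 < n * m := Nat.lt_of_le_of_lt (Nat.zero_le _) i.isLt
        rw [h, Nat.mul_zero] at hpos
        exact absurd hpos (lt_irrefl 0))⟩ j

end LFT

/-- A family of `k` vectors in `F^N` is in reduced row echelon form if there are strictly
increasing pivot positions where each vector has a leading `1` (with zeros in that
coordinate for the other vectors) and zeros before its pivot. -/
def IsRREF {F : Type} [Field F] {k N : ℕ} (b : Fin k → Fin N → F) : Prop :=
  ∃ p : Fin k → Fin N, StrictMono p ∧
    (∀ i i' : Fin k, b i' (p i) = if i' = i then 1 else 0) ∧
    ∀ (i : Fin k) (c : Fin N), (c : ℕ) < (p i : ℕ) → b i c = 0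

/-- A linear finite transducer of size `n` is canonical if the columns
`Δ_M e₁, …, Δ_M eₙ` of its diagnostic matrix form the standard basis (the reduced row
echelon form basis) of the column space `{Δ_M s ∣ s}` of `Δ_M`: they are linearly
independent (hence a basis of the column space, which they always span) and in RREF. -/
def LFT.IsCanonical {F : Type} [Field F] {ℓ m n : ℕ} (M : LFT F ℓ m n) : Prop :=
  LinearIndependent F (fun j : Fin n => fun r : Fin (n * m) => M.diagMat r j) ∧
    IsRREF (fun j : Fin n => fun r : Fin (n * m) => M.diagMat r j)

/-! A transducer `M` of size `n₂` equivalent to the minimal `M₁` amounts to a surjective matrix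
`T : F^{n₂} → F^{n₁}` together with matrices satisfying `T A = A₁ T`, `T B = B₁`, `C = C₁ T`,
`D = D₁`: `T` sends a state of `M` to its unique equivalent state of `M₁`, and this assignment
is linear because, once two transducers have one pair of equivalent states, equivalence of
states is decided by the linear observations `C Aᵏ s`. For fixed `T`, the equations
`T A = A₁ T` and `T B = B₁` are affine with `q^{(n₂ - n₁) n₂}` and `q^{(n₂ - n₁) ℓ}` solutions,
while there are `∏_{i<n₁} (q^{n₂} - q^i)` surjective `T`. Finally minimality makes `Δ_{M₁}`
injective (by Cayley–Hamilton the observations `C₁ A₁ᵏ s` with `k < n₁` determine all others),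
so `rank Δ_{M₁} = n₁`. -/

open Function Matrix Polynomial Module

theorem LinearMap.natCard_fiber_of_surjective {K V W : Type*} [Field K] [Fintype K]
    [AddCommGroup V] [Module K V] [FiniteDimensional K V] [AddCommGroup W] [Module K W]
    {f : V →ₗ[K] W} (hf : Surjective f) (w : W) :
    Nat.card {v // f v = w} = Fintype.card K ^ (finrank K V - finrank K W) := by
  have hker : finrank K (LinearMap.ker f) = finrank K V - finrank K W := by
    have := f.finrank_range_add_finrank_ker
    rw [LinearMap.range_eq_top.2 hf, finrank_top] at this
    omega
  rw [← hker, ← Nat.card_eq_fintype_card, ← Module.natCard_eq_pow_finrank]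
  exact Nat.card_congr (f.toAddMonoidHom.fiberEquivKerOfSurjective hf w)

namespace Matrix

variable {K : Type*} [Field K] {l m n : Type*} [Fintype m] [DecidableEq m] [Fintype n]

theorem mulVec_surjective_iff_linearIndependent_row {T : Matrix m n K} :
    Surjective T.mulVec ↔ LinearIndependent K T.row := by
  constructor
  · intro hT
    obtain ⟨U, hU⟩ := mulVec_surjective_iff_exists_right_inverse.1 hT
    rw [← vecMul_injective_iff]
    intro x y hxy
    simpa [vecMul_vecMul, hU] using congrArg (· ᵥ* U) hxy
  · intro h
    refine LinearMap.range_eq_top.1 <|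
      Submodule.eq_top_of_finrank_eq (S := LinearMap.range T.mulVecLin) ?_
    rw [← Matrix.rank, h.rank_matrix, finrank_fintype_fun_eq_card]

theorem natCard_mul_eq_of_mulVec_surjective [Fintype K] [Fintype l] {T : Matrix m n K}
    (hT : Surjective T.mulVec) (R : Matrix m l K) :
    Nat.card {X : Matrix n l K // T * X = R} =
      Fintype.card K ^ ((Fintype.card n - Fintype.card m) * Fintype.card l) := by
  obtain ⟨U, hU⟩ := mulVec_surjective_iff_exists_right_inverse.1 hT
  have hsurj : Surjective (mulLeftLinearMap l K T) := fun Y =>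
    ⟨U * Y, by simp [← Matrix.mul_assoc, hU]⟩
  refine (LinearMap.natCard_fiber_of_surjective hsurj R).trans ?_
  simp [Module.finrank_matrix, Nat.sub_mul]

theorem natCard_mulVec_surjective [Fintype K] {a b : ℕ} (hab : a ≤ b) :
    Nat.card {T : Matrix (Fin a) (Fin b) K // Surjective T.mulVec} =
      ∏ i ∈ Finset.range a, (Fintype.card K ^ b - Fintype.card K ^ i) := by
  rw [Nat.card_congr (Equiv.subtypeEquivRight fun _ => mulVec_surjective_iff_linearIndependent_row),
    ← Fin.prod_univ_eq_prod_range]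
  have := card_linearIndependent (K := K) (V := Fin b → K) (k := a) (by simpa using hab)
  rwa [Module.finrank_fin_fun] at this

theorem mul_pow_mulVec_eq_zero {R ι κ : Type*} [CommRing R] [Nontrivial R] [Fintype ι]
    [DecidableEq ι] {A : Matrix ι ι R} {C : Matrix κ ι R} {s : ι → R}
    (h : ∀ k < Fintype.card ι, (C * A ^ k) *ᵥ s = 0) (k : ℕ) : (C * A ^ k) *ᵥ s = 0 := by
  have hdeg : (X ^ k %ₘ A.charpoly).degree < Fintype.card ι := by
    simpa [A.charpoly_degree_eq_dim] using degree_modByMonic_lt (X ^ k) A.charpoly_monic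
  rw [A.pow_eq_aeval_mod_charpoly, aeval_eq_sum_range, Matrix.mul_sum, sum_mulVec]
  refine Finset.sum_eq_zero fun i _ => ?_
  rw [Matrix.mul_smul, smul_mulVec]
  rcases lt_or_ge i (Fintype.card ι) with hi | hi
  · rw [h i hi, smul_zero]
  · rw [coeff_eq_zero_of_degree_lt (hdeg.trans_le (by exact_mod_cast hi)), zero_smul]

end Matrix

namespace LFT

variable {F : Type} [Field F] {ℓ m n n₁ n' n'' : ℕ}

theorem del_zero_right (M : LFT F ℓ m n) (s : Fin n → F) : M.del s 0 = M.A *ᵥ s := by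
  simp [del]

theorem del_zero_left (M : LFT F ℓ m n) (x : Fin ℓ → F) : M.del 0 x = M.B *ᵥ x := by
  simp [del]

theorem out_zero_right (M : LFT F ℓ m n) (s : Fin n → F) : M.out s 0 = M.C *ᵥ s := by
  simp [out]

section StateEquiv

variable {M : LFT F ℓ m n} {M' : LFT F ℓ m n'} {s t : Fin n → F} {s' t' : Fin n' → F}

theorem StateEquiv.symm (h : StateEquiv M M' s s') : StateEquiv M' M s' s :=
  fun α => (h α).symm

theorem StateEquiv.trans {M'' : LFT F ℓ m n''} {s'' : Fin n'' → F} (h : StateEquiv M M' s s')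
    (h' : StateEquiv M' M'' s' s'') : StateEquiv M M'' s s'' :=
  fun α => (h α).trans (h' α)

theorem StateEquiv.out_eq (h : StateEquiv M M' s s') (x : Fin ℓ → F) :
    M.out s x = M'.out s' x :=
  (List.cons.inj (h [x])).1

theorem StateEquiv.del (h : StateEquiv M M' s s') (x : Fin ℓ → F) :
    StateEquiv M M' (M.del s x) (M'.del s' x) :=
  fun α => (List.cons.inj (h (x :: α))).2

theorem StateEquiv.mul_pow_mulVec_eq (h : StateEquiv M M' s s') (k : ℕ) :
    (M.C * M.A ^ k) *ᵥ s = (M'.C * M'.A ^ k) *ᵥ s' := by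
  induction k generalizing s s' with
  | zero => simpa [out_zero_right] using h.out_eq 0
  | succ k ih =>
    have := ih (h.del 0)
    simp only [del_zero_right, mulVec_mulVec] at this
    simpa only [pow_succ, Matrix.mul_assoc] using this

theorem StateEquiv.D_eq (h : StateEquiv M M' s s') : M.D = M'.D := by
  have hC : M.C *ᵥ s = M'.C *ᵥ s' := by simpa [out_zero_right] using h.out_eq 0
  refine ext_iff_mulVec.2 fun x => add_left_cancel (a := M.C *ᵥ s) ?_
  have := h.out_eq x
  rwa [out, out, ← hC] at this

theorem StateEquiv.mul_pow_mul_B_eq (h : StateEquiv M M' s s') (k : ℕ) :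
    M.C * M.A ^ k * M.B = M'.C * M'.A ^ k * M'.B := by
  refine ext_iff_mulVec.2 fun x => ?_
  have hx := (h.del x).mul_pow_mulVec_eq k
  have h0 := (h.del 0).mul_pow_mulVec_eq k
  simp only [LFT.del, mulVec_add, mulVec_zero, add_zero, mulVec_mulVec] at hx h0
  rw [h0] at hx
  exact add_left_cancel hx

theorem stateEquiv_of_mul_pow_mulVec_eq (hD : M.D = M'.D)
    (hB : ∀ k, M.C * M.A ^ k * M.B = M'.C * M'.A ^ k * M'.B)
    (hs : ∀ k, (M.C * M.A ^ k) *ᵥ s = (M'.C * M'.A ^ k) *ᵥ s') : StateEquiv M M' s s' := by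
  intro α
  induction α generalizing s s' with
  | nil => rfl
  | cons x α ih =>
    refine congrArg₂ List.cons ?_ (ih fun k => ?_)
    · simpa [out, hD] using hs 0
    · have hA : (M.C * M.A ^ k * M.A) *ᵥ s = (M'.C * M'.A ^ k * M'.A) *ᵥ s' := by
        simpa only [pow_succ, Matrix.mul_assoc] using hs (k + 1)
      simp only [LFT.del, mulVec_add, mulVec_mulVec, hA, hB k]

theorem StateEquiv.add (h : StateEquiv M M' s s') (h' : StateEquiv M M' t t') :
    StateEquiv M M' (s + t) (s' + t') :=
  stateEquiv_of_mul_pow_mulVec_eq h.D_eq h.mul_pow_mul_B_eq fun k => by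
    rw [mulVec_add, mulVec_add, h.mul_pow_mulVec_eq, h'.mul_pow_mulVec_eq]

theorem StateEquiv.smul (h : StateEquiv M M' s s') (c : F) :
    StateEquiv M M' (c • s) (c • s') :=
  stateEquiv_of_mul_pow_mulVec_eq h.D_eq h.mul_pow_mul_B_eq fun k => by
    rw [mulVec_smul, mulVec_smul, h.mul_pow_mulVec_eq]

end StateEquiv

theorem diagMat_apply (M : LFT F ℓ m n) {k : ℕ} (j : Fin m) (hk : (j : ℕ) + k * m < n * m)
    (i : Fin n) : M.diagMat ⟨j + k * m, hk⟩ i = (M.C * M.A ^ k) j i := by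
  have hm : 0 < m := j.pos
  simp only [diagMat, of_apply, Nat.add_mul_div_right _ _ hm, Nat.div_eq_of_lt j.2,
    Nat.add_mul_mod_self_right, Nat.mod_eq_of_lt j.2, zero_add]

theorem mul_pow_mulVec_eq_zero_of_diagMat_mulVec_eq_zero (M : LFT F ℓ m n) {s : Fin n → F}
    (hs : M.diagMat *ᵥ s = 0) {k : ℕ} (hk : k < n) : (M.C * M.A ^ k) *ᵥ s = 0 := by
  ext j
  have hjk : (j : ℕ) + k * m < n * m := by nlinarith [j.2]
  simpa [mulVec, dotProduct, diagMat_apply] using congrFun hs ⟨j + k * m, hjk⟩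

theorem Minimal.rank_diagMat {M : LFT F ℓ m n} (hmin : M.Minimal) : M.diagMat.rank = n := by
  have hker : LinearMap.ker M.diagMat.mulVecLin = ⊥ := by
    refine (Submodule.eq_bot_iff _).2 fun s hs => hmin s 0 ?_
    refine stateEquiv_of_mul_pow_mulVec_eq rfl (fun _ => rfl) fun k => ?_
    rw [mulVec_zero]
    exact Matrix.mul_pow_mulVec_eq_zero (by simpa using
      fun k hk => M.mul_pow_mulVec_eq_zero_of_diagMat_mulVec_eq_zero hs hk) k
  rw [Matrix.rank, LinearMap.finrank_range_of_inj (LinearMap.ker_eq_bot.1 hker),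
    Module.finrank_fin_fun]

theorem Minimal.eq_of_stateEquiv {M : LFT F ℓ m n} {M₁ : LFT F ℓ m n₁} (hmin : M₁.Minimal)
    {s : Fin n → F} {s₁ s₁' : Fin n₁ → F} (h : StateEquiv M M₁ s s₁)
    (h' : StateEquiv M M₁ s s₁') : s₁ = s₁' :=
  hmin _ _ (h.symm.trans h')

structure IsHom (T : Matrix (Fin n₁) (Fin n) F) (M : LFT F ℓ m n) (M₁ : LFT F ℓ m n₁) :
    Prop where
  mul_A : T * M.A = M₁.A * T
  mul_B : T * M.B = M₁.B
  C_eq : M.C = M₁.C * T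
  D_eq : M.D = M₁.D

namespace IsHom

variable {T : Matrix (Fin n₁) (Fin n) F} {M : LFT F ℓ m n} {M₁ : LFT F ℓ m n₁}

theorem stateEquiv (h : IsHom T M M₁) (s : Fin n → F) : StateEquiv M M₁ s (T *ᵥ s) := by
  intro α
  induction α generalizing s with
  | nil => rfl
  | cons x α ih =>
    have hout : M.out s x = M₁.out (T *ᵥ s) x := by
      simp only [out, h.C_eq, h.D_eq, mulVec_mulVec]
    have hdel : M₁.del (T *ᵥ s) x = T *ᵥ M.del s x := by
      simp only [del, mulVec_add, mulVec_mulVec, h.mul_A, h.mul_B]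
    exact congrArg₂ List.cons hout (hdel ▸ ih (M.del s x))

theorem equiv (h : IsHom T M M₁) (hT : Surjective T.mulVec) : Equiv M M₁ := by
  refine ⟨fun s => ⟨T *ᵥ s, h.stateEquiv s⟩, fun s₁ => ?_⟩
  obtain ⟨s, rfl⟩ := hT s₁
  exact ⟨s, h.stateEquiv s⟩

theorem unique (hmin : M₁.Minimal) {T' : Matrix (Fin n₁) (Fin n) F} (h : IsHom T M M₁)
    (h' : IsHom T' M M₁) : T = T' :=
  ext_iff_mulVec.2 fun s => hmin.eq_of_stateEquiv (h.stateEquiv s) (h'.stateEquiv s)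

end IsHom

namespace Minimal

variable {M₁ : LFT F ℓ m n₁}

theorem exists_isHom_of_equiv (hmin : M₁.Minimal) {M : LFT F ℓ m n} (hE : Equiv M M₁) :
    ∃ T : Matrix (Fin n₁) (Fin n) F, IsHom T M M₁ ∧ Surjective T.mulVec := by
  choose f hf using hE.1
  have hf_eq : ∀ {s s₁}, StateEquiv M M₁ s s₁ → f s = s₁ :=
    fun h => hmin.eq_of_stateEquiv (hf _) h
  let L : (Fin n → F) →ₗ[F] (Fin n₁ → F) :=
    { toFun := f
      map_add' := fun s t => hf_eq ((hf s).add (hf t))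
      map_smul' := fun c s => hf_eq ((hf s).smul c) }
  have hT (s : Fin n → F) : L.toMatrix' *ᵥ s = f s := L.toMatrix'_mulVec s
  have hf0 : StateEquiv M M₁ 0 0 := L.map_zero ▸ hf 0
  refine ⟨L.toMatrix', ⟨?_, ?_, ?_, hf0.D_eq⟩, fun s₁ => ?_⟩
  · refine ext_iff_mulVec.2 fun s => ?_
    rw [← mulVec_mulVec, ← mulVec_mulVec, hT, hT, ← del_zero_right, ← del_zero_right]
    exact hf_eq ((hf s).del 0)
  · refine ext_iff_mulVec.2 fun x => ?_
    rw [← mulVec_mulVec, hT, ← del_zero_left, ← del_zero_left]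
    exact hf_eq (hf0.del x)
  · refine ext_iff_mulVec.2 fun s => ?_
    rw [← mulVec_mulVec, hT, ← out_zero_right, ← out_zero_right]
    exact (hf s).out_eq 0
  · obtain ⟨s, hs⟩ := hE.2 s₁
    exact ⟨s, (hT s).trans (hf_eq hs)⟩

theorem equiv_iff_exists_isHom (hmin : M₁.Minimal) (M : LFT F ℓ m n) :
    Equiv M M₁ ↔ ∃ T : Matrix (Fin n₁) (Fin n) F, IsHom T M M₁ ∧ Surjective T.mulVec :=
  ⟨hmin.exists_isHom_of_equiv, fun ⟨_, hT, hsurj⟩ => hT.equiv hsurj⟩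

theorem natCard_equiv_eq_natCard_sigma (hmin : M₁.Minimal) :
    Nat.card {M : LFT F ℓ m n // Equiv M M₁} =
      Nat.card (Σ T : {T : Matrix (Fin n₁) (Fin n) F // Surjective T.mulVec},
        {A : Matrix (Fin n) (Fin n) F // T.1 * A = M₁.A * T.1} ×
          {B : Matrix (Fin n) (Fin ℓ) F // T.1 * B = M₁.B}) := by
  refine (Nat.card_eq_of_bijective (fun p => ⟨⟨p.2.1.1, p.2.2.1, M₁.C * p.1.1, M₁.D⟩,
    IsHom.equiv ⟨p.2.1.2, p.2.2.2, rfl, rfl⟩ p.1.2⟩) ⟨?_, ?_⟩).symm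
  · rintro ⟨⟨T, hT⟩, ⟨A, hA⟩, ⟨B, hB⟩⟩ ⟨⟨T', hT'⟩, ⟨A', hA'⟩, ⟨B', hB'⟩⟩ h
    simp only [Subtype.mk.injEq, LFT.mk.injEq, and_true] at h
    obtain ⟨rfl, rfl, hC⟩ := h
    obtain rfl : T = T' := IsHom.unique hmin (M := ⟨A, B, M₁.C * T, M₁.D⟩)
      ⟨hA, hB, rfl, rfl⟩ ⟨hA', hB', hC, rfl⟩
    rfl
  · rintro ⟨M, hM⟩
    obtain ⟨T, hT, hsurj⟩ := (hmin.equiv_iff_exists_isHom M).1 hM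
    refine ⟨⟨⟨T, hsurj⟩, ⟨M.A, hT.mul_A⟩, ⟨M.B, hT.mul_B⟩⟩, Subtype.ext ?_⟩
    show (⟨M.A, M.B, M₁.C * T, M₁.D⟩ : LFT F ℓ m n) = M
    rw [← hT.C_eq, ← hT.D_eq]

theorem natCard_equiv [Fintype F] (hmin : M₁.Minimal) (hn : n₁ ≤ n) :
    Nat.card {M : LFT F ℓ m n // Equiv M M₁} =
      (∏ i ∈ Finset.range n₁, (Fintype.card F ^ n - Fintype.card F ^ i)) *
        Fintype.card F ^ ((n + ℓ) * (n - n₁)) := by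
  have : Fintype {T : Matrix (Fin n₁) (Fin n) F // Surjective T.mulVec} := Fintype.ofFinite _
  rw [hmin.natCard_equiv_eq_natCard_sigma, Nat.card_sigma,
    Finset.sum_congr rfl fun T _ => by
      rw [Nat.card_prod, natCard_mul_eq_of_mulVec_surjective T.2,
        natCard_mul_eq_of_mulVec_surjective T.2],
    Finset.sum_const, Finset.card_univ, ← Nat.card_eq_fintype_card,
    natCard_mulVec_surjective hn, smul_eq_mul, ← pow_add]
  simp only [Fintype.card_fin]
  congr 2
  ring

end Minimal

end LFT

theorem card_equiv_class_of_minimal_general {F : Type} [Field F] [Fintype F] {ℓ m n₁ : ℕ}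
    (M₁ : LFT F ℓ m n₁) (hmin : M₁.Minimal) (n₂ : ℕ) (hn₂ : n₁ ≤ n₂) :
    Nat.card {M : LFT F ℓ m n₂ // LFT.Equiv M M₁} =
      (∏ i ∈ Finset.range M₁.diagMat.rank,
          (Fintype.card F ^ n₂ - Fintype.card F ^ i)) *
        Fintype.card F ^ ((n₂ + ℓ) * (n₂ - M₁.diagMat.rank)) := by
  rw [hmin.rank_diagMat]
  exact hmin.natCard_equiv hn₂

/-- for a minimal LFT `M₁` over `F_q` (`q = |F|` a prime power) with
structural parameters `ℓ, m, n₁` and `n₂ ≥ n₁`, the number of LFTs of size `n₂`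
equivalent to `M₁` is `∏_{i=0}^{r−1}(q^{n₂} − q^i) · q^{(n₂+ℓ)(n₂−r)}`, where
`r = rank Δ_{M₁}`. -/
theorem card_equiv_class_of_minimal {F : Type} [Field F] [Fintype F] {ℓ m n₁ : ℕ}
    (hℓ : 0 < ℓ) (hm : 0 < m) (hn₁ : 0 < n₁)
    (M₁ : LFT F ℓ m n₁) (hmin : M₁.Minimal) (n₂ : ℕ) (hn₂ : n₁ ≤ n₂) :
    Nat.card {M : LFT F ℓ m n₂ // LFT.Equiv M M₁} =
      (∏ i ∈ Finset.range M₁.diagMat.rank,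
          (Fintype.card F ^ n₂ - Fintype.card F ^ i)) *
        Fintype.card F ^ ((n₂ + ℓ) * (n₂ - M₁.diagMat.rank)) :=
  card_equiv_class_of_minimal_general M₁ hmin n₂ hn₂
end

section
/- Let q be a prime power and let M be a canonical linear finite transducer over F_q with structural parameters ℓ, m, n. Then rank(Δ_M) = n, M is minimal, and |[M]_{∼_n}| = ∏_{i=0}^{n−1}(q^n − q^i). -/
section Proofs

open Matrix

variable {F : Type} [Field F] {ℓ m n n₁ n₂ : ℕ}

private lemma matrix_ext_single {a b : ℕ} {P Q : Matrix (Fin a) (Fin b) F}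
    (h : ∀ j, P *ᵥ Pi.single j 1 = Q *ᵥ Pi.single j 1) : P = Q := by
  ext i j
  have := congrFun (h j) i
  simpa using this

private lemma lambdaStar_cons (M : LFT F ℓ m n) (s : Fin n → F) (x : Fin ℓ → F)
    (w : List (Fin ℓ → F)) :
    lambdaStar M.del M.out s (x :: w) =
      M.out s x :: lambdaStar M.del M.out (M.del s x) w := rfl

private lemma lambdaStar_zeros (M : LFT F ℓ m n) (s : Fin n → F) (k : ℕ) :
    lambdaStar M.del M.out s (List.replicate k 0) =
      List.ofFn (fun i : Fin k => (M.C * M.A ^ (i : ℕ)) *ᵥ s) := by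
  induction k generalizing s with
  | zero => rfl
  | succ k ih =>
    rw [List.replicate_succ, lambdaStar_cons, ih, List.ofFn_succ]
    congr 1
    · simp [LFT.out]
    · rw [List.ofFn_inj]
      funext i
      simp [LFT.del, pow_succ, Matrix.mulVec_mulVec, Matrix.mul_assoc]

/-- The simulation relation between states. -/
private def Sim (M₁ : LFT F ℓ m n₁) (M₂ : LFT F ℓ m n₂) (s₁ : Fin n₁ → F)
    (s₂ : Fin n₂ → F) : Prop :=
  ∀ k : ℕ, (M₁.C * M₁.A ^ k) *ᵥ s₁ = (M₂.C * M₂.A ^ k) *ᵥ s₂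

private lemma stateEquiv_iff {M₁ : LFT F ℓ m n₁} {M₂ : LFT F ℓ m n₂}
    {s₁ : Fin n₁ → F} {s₂ : Fin n₂ → F} :
    LFT.StateEquiv M₁ M₂ s₁ s₂ ↔
      M₁.D = M₂.D ∧ (∀ k, M₁.C * M₁.A ^ k * M₁.B = M₂.C * M₂.A ^ k * M₂.B) ∧
        Sim M₁ M₂ s₁ s₂ := by
  constructor
  · intro h
    have hsim : Sim M₁ M₂ s₁ s₂ := by
      intro k
      have h1 := h (List.replicate (k + 1) 0)
      rw [lambdaStar_zeros, lambdaStar_zeros, List.ofFn_inj] at h1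
      exact congrFun h1 ⟨k, Nat.lt_succ_self k⟩
    have h0 := hsim 0
    simp only [pow_zero, Matrix.mul_one] at h0
    refine ⟨?_, ?_, hsim⟩
    · apply matrix_ext_single
      intro j
      have h2 : M₁.C *ᵥ s₁ + M₁.D *ᵥ Pi.single j 1
          = M₂.C *ᵥ s₂ + M₂.D *ᵥ Pi.single j 1 := by
        have h1 := h [Pi.single j 1]
        simpa [lambdaStar, LFT.out] using h1
      rw [h0] at h2
      exact add_left_cancel h2
    · intro k
      apply matrix_ext_single
      intro j
      have h1 := h (Pi.single j 1 :: List.replicate (k + 1) 0)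
      rw [lambdaStar_cons, lambdaStar_cons, lambdaStar_zeros, lambdaStar_zeros] at h1
      have h2 : (List.ofFn fun i : Fin (k+1) => (M₁.C * M₁.A ^ (i : ℕ)) *ᵥ M₁.del s₁ (Pi.single j 1))
          = List.ofFn fun i : Fin (k+1) => (M₂.C * M₂.A ^ (i : ℕ)) *ᵥ M₂.del s₂ (Pi.single j 1) :=
        List.tail_eq_of_cons_eq h1
      rw [List.ofFn_inj] at h2
      have h3 := congrFun h2 ⟨k, Nat.lt_succ_self k⟩
      simp only [LFT.del, Matrix.mulVec_add, Matrix.mulVec_mulVec] at h3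
      have e1 : M₁.C * M₁.A ^ k * M₁.A = M₁.C * M₁.A ^ (k + 1) := by
        rw [pow_succ, Matrix.mul_assoc]
      have e2 : M₂.C * M₂.A ^ k * M₂.A = M₂.C * M₂.A ^ (k + 1) := by
        rw [pow_succ, Matrix.mul_assoc]
      rw [e1, e2, hsim (k + 1)] at h3
      exact add_left_cancel h3
  · rintro ⟨hD, hB, hsim⟩
    intro α
    induction α generalizing s₁ s₂ with
    | nil => rfl
    | cons x w ih =>
      rw [lambdaStar_cons, lambdaStar_cons]
      have h0 := hsim 0
      simp only [pow_zero, Matrix.mul_one] at h0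
      congr 1
      · simp only [LFT.out]
        rw [h0, hD]
      · apply ih
        intro k
        simp only [LFT.del, Matrix.mulVec_add, Matrix.mulVec_mulVec]
        have e1 : M₁.C * M₁.A ^ k * M₁.A = M₁.C * M₁.A ^ (k + 1) := by
          rw [pow_succ, Matrix.mul_assoc]
        have e2 : M₂.C * M₂.A ^ k * M₂.A = M₂.C * M₂.A ^ (k + 1) := by
          rw [pow_succ, Matrix.mul_assoc]
        rw [e1, e2, hsim (k + 1), hB k]

private lemma mulVec_inj_of_li {a b : ℕ} {P : Matrix (Fin a) (Fin b) F}
    (hli : LinearIndependent F (fun j : Fin b => fun r : Fin a => P r j))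
    {v w : Fin b → F} (h : P *ᵥ v = P *ᵥ w) : v = w := by
  have hz := Fintype.linearIndependent_iff.mp hli (fun j => v j - w j) ?_
  · funext j
    exact sub_eq_zero.mp (hz j)
  · funext r
    have hr := congrFun h r
    simp only [Matrix.mulVec, dotProduct] at hr
    simp only [Finset.sum_apply, Pi.smul_apply, smul_eq_mul, Pi.zero_apply]
    have e1 : ∑ j, (v j - w j) * P r j
        = (∑ j, P r j * v j) - ∑ j, P r j * w j := by
      rw [← Finset.sum_sub_distrib]
      exact Finset.sum_congr rfl fun j _ => by ring
    rw [e1, hr, sub_self]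

private lemma diagMat_mulVec (M : LFT F ℓ m n) (hm : 0 < m) (t : Fin n → F)
    (r : Fin (n * m)) :
    (M.diagMat *ᵥ t) r
      = ((M.C * M.A ^ ((r : ℕ) / m)) *ᵥ t) ⟨(r : ℕ) % m, Nat.mod_lt _ hm⟩ := rfl

private lemma sim_inj (M : LFT F ℓ m n) (hm : 0 < m)
    (hli : LinearIndependent F fun j : Fin n => fun r : Fin (n * m) => M.diagMat r j)
    {s s' : Fin n → F}
    (h : ∀ k : ℕ, (M.C * M.A ^ k) *ᵥ s = (M.C * M.A ^ k) *ᵥ s') : s = s' := by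
  apply mulVec_inj_of_li hli
  funext r
  rw [diagMat_mulVec M hm, diagMat_mulVec M hm, h]

private lemma LFT.ext'' {M₁ M₂ : LFT F ℓ m n} (hA : M₁.A = M₂.A) (hB : M₁.B = M₂.B)
    (hC : M₁.C = M₂.C) (hD : M₁.D = M₂.D) : M₁ = M₂ := by
  cases M₁; cases M₂
  cases hA; cases hB; cases hC; cases hD
  rfl

private lemma inv_mul_cancel_mat {c : ℕ} (T : (Matrix (Fin n) (Fin n) F)ˣ)
    (P : Matrix (Fin n) (Fin c) F) : (T⁻¹).val * (T.val * P) = P := by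
  rw [← Matrix.mul_assoc, Units.inv_mul, Matrix.one_mul]

private lemma mul_inv_cancel_mat {c : ℕ} (T : (Matrix (Fin n) (Fin n) F)ˣ)
    (P : Matrix (Fin c) (Fin n) F) : P * T.val * (T⁻¹).val = P := by
  rw [Matrix.mul_assoc, Units.mul_inv, Matrix.mul_one]

/-- Conjugation of an LFT by an invertible matrix. -/
private def lftConj (M : LFT F ℓ m n) (T : (Matrix (Fin n) (Fin n) F)ˣ) : LFT F ℓ m n :=
  ⟨(T⁻¹).val * M.A * T.val, (T⁻¹).val * M.B, M.C * T.val, M.D⟩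

private lemma lftConj_pow (M : LFT F ℓ m n) (T : (Matrix (Fin n) (Fin n) F)ˣ) (k : ℕ) :
    ((T⁻¹).val * M.A * T.val) ^ k = (T⁻¹).val * M.A ^ k * T.val := by
  induction k with
  | zero => rw [pow_zero, pow_zero, mul_one, Units.inv_mul]
  | succ k ih =>
    rw [pow_succ, ih, pow_succ]
    rw [mul_assoc, mul_assoc, mul_assoc, mul_assoc, ← mul_assoc (T.val),
      Units.mul_inv, one_mul, mul_assoc (M.A ^ k)]

private lemma lftConj_CA (M : LFT F ℓ m n) (T : (Matrix (Fin n) (Fin n) F)ˣ) (k : ℕ) :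
    (lftConj M T).C * (lftConj M T).A ^ k = M.C * M.A ^ k * T.val := by
  show (M.C * T.val) * ((T⁻¹).val * M.A * T.val) ^ k = M.C * M.A ^ k * T.val
  rw [lftConj_pow]
  have h : T.val * ((T⁻¹).val * M.A ^ k * T.val) = M.A ^ k * T.val := by
    rw [← mul_assoc, ← mul_assoc, Units.mul_inv, one_mul]
  rw [Matrix.mul_assoc, h, Matrix.mul_assoc]

private lemma lftConj_CAB (M : LFT F ℓ m n) (T : (Matrix (Fin n) (Fin n) F)ˣ) (k : ℕ) :
    (lftConj M T).C * (lftConj M T).A ^ k * (lftConj M T).B = M.C * M.A ^ k * M.B := by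
  rw [lftConj_CA]
  show (M.C * M.A ^ k * T.val) * ((T⁻¹).val * M.B) = M.C * M.A ^ k * M.B
  rw [← Matrix.mul_assoc, mul_inv_cancel_mat]

private lemma lftConj_equiv (M : LFT F ℓ m n) (T : (Matrix (Fin n) (Fin n) F)ˣ) :
    (lftConj M T).Equiv M := by
  constructor
  · intro s'
    refine ⟨T.val *ᵥ s', stateEquiv_iff.mpr ⟨rfl, lftConj_CAB M T, fun k => ?_⟩⟩
    rw [lftConj_CA, Matrix.mulVec_mulVec]
  · intro s
    refine ⟨(T⁻¹).val *ᵥ s, stateEquiv_iff.mpr ⟨rfl, lftConj_CAB M T, fun k => ?_⟩⟩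
    rw [lftConj_CA, Matrix.mulVec_mulVec, mul_inv_cancel_mat]

private lemma lftConj_injective (M : LFT F ℓ m n) (hm : 0 < m)
    (hli : LinearIndependent F fun j : Fin n => fun r : Fin (n * m) => M.diagMat r j) :
    Function.Injective (lftConj M) := by
  intro T₁ T₂ h
  have hC : ∀ k, M.C * M.A ^ k * T₁.val = M.C * M.A ^ k * T₂.val := fun k => by
    rw [← lftConj_CA M T₁ k, ← lftConj_CA M T₂ k, h]
  have hTT : T₁.val = T₂.val := by
    apply matrix_ext_single
    intro j
    apply sim_inj M hm hli
    intro k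
    rw [Matrix.mulVec_mulVec, Matrix.mulVec_mulVec, hC k]
  exact Units.ext hTT

private lemma equiv_char (M : LFT F ℓ m n) (hm : 0 < m)
    (hli : LinearIndependent F fun j : Fin n => fun r : Fin (n * m) => M.diagMat r j)
    {M' : LFT F ℓ m n} (h : M'.Equiv M) : ∃ T, lftConj M T = M' := by
  classical
  obtain ⟨s0, hs0⟩ := h.1 0
  obtain ⟨hD, hB, -⟩ := stateEquiv_iff.mp hs0
  have hex : ∀ s', ∃ s, Sim M' M s' s := fun s' => by
    obtain ⟨s, hs⟩ := h.1 s'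
    exact ⟨s, (stateEquiv_iff.mp hs).2.2⟩
  set Tm : Matrix (Fin n) (Fin n) F :=
    Matrix.of fun i j => Classical.choose (hex (Pi.single j 1)) i with hTm
  have hcol : ∀ j, Tm *ᵥ Pi.single j 1 = Classical.choose (hex (Pi.single j 1)) := by
    intro j
    funext i
    simp [hTm]
  have hCk : ∀ k, M'.C * M'.A ^ k = M.C * M.A ^ k * Tm := by
    intro k
    apply matrix_ext_single
    intro j
    have hsp := Classical.choose_spec (hex (Pi.single j 1)) k
    rw [← hcol j] at hsp
    rw [hsp, Matrix.mulVec_mulVec]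
  have hsimT : ∀ v, Sim M' M v (Tm *ᵥ v) := by
    intro v k
    rw [hCk k, Matrix.mulVec_mulVec]
  have hsurj : Function.Surjective Tm.mulVec := by
    intro s
    obtain ⟨s', hs'⟩ := h.2 s
    refine ⟨s', ?_⟩
    have hsim := (stateEquiv_iff.mp hs').2.2
    apply sim_inj M hm hli
    intro k
    rw [← hsimT s' k]
    exact hsim k
  obtain ⟨T, hT⟩ := Matrix.mulVec_surjective_iff_isUnit.mp hsurj
  have hTA : Tm * M'.A = M.A * Tm := by
    apply matrix_ext_single
    intro j
    apply sim_inj M hm hli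
    intro k
    have h1 : (M.C * M.A ^ k) * (Tm * M'.A) = (M'.C * M'.A ^ k) * M'.A := by
      rw [← Matrix.mul_assoc, ← hCk k]
    have h2 : (M'.C * M'.A ^ k) * M'.A = M'.C * M'.A ^ (k + 1) := by
      rw [pow_succ, Matrix.mul_assoc]
    have h4 : M.C * M.A ^ (k + 1) * Tm = (M.C * M.A ^ k) * (M.A * Tm) := by
      rw [pow_succ]
      simp only [Matrix.mul_assoc]
    have hmat := h1.trans (h2.trans ((hCk (k + 1)).trans h4))
    rw [Matrix.mulVec_mulVec, Matrix.mulVec_mulVec, hmat]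
  have hTB : Tm * M'.B = M.B := by
    apply matrix_ext_single
    intro j
    apply sim_inj M hm hli
    intro k
    have hmat : (M.C * M.A ^ k) * (Tm * M'.B) = (M.C * M.A ^ k) * M.B := by
      rw [← Matrix.mul_assoc, ← hCk k, hB k]
    rw [Matrix.mulVec_mulVec, Matrix.mulVec_mulVec, hmat]
  have hC0 := hCk 0
  simp only [pow_zero, Matrix.mul_one] at hC0
  rw [← hT] at hTA hTB hC0
  refine ⟨T, LFT.ext'' ?_ ?_ ?_ ?_⟩
  · show (T⁻¹).val * M.A * T.val = M'.A
    rw [Matrix.mul_assoc, ← hTA, ← Matrix.mul_assoc, Units.inv_mul, Matrix.one_mul]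
  · show (T⁻¹).val * M.B = M'.B
    rw [← hTB, inv_mul_cancel_mat]
  · exact hC0.symm
  · exact hD.symm

end Proofs

/-- a canonical LFT `M` over `F_q` (`q = |F|` a prime power) has
`rank Δ_M = n`, is minimal, and its equivalence class (among LFTs with the same
structural parameters) has size `∏_{i=0}^{n−1}(qⁿ − q^i)`. -/
theorem canonical_rank_minimal_card {F : Type} [Field F] [Fintype F] {ℓ m n : ℕ}
    (hℓ : 0 < ℓ) (hm : 0 < m) (hn : 0 < n) (M : LFT F ℓ m n) (hM : M.IsCanonical) :
    M.diagMat.rank = n ∧ M.Minimal ∧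
      Nat.card {M' : LFT F ℓ m n // LFT.Equiv M' M} =
        ∏ i ∈ Finset.range n, (Fintype.card F ^ n - Fintype.card F ^ i) := by
  obtain ⟨hli, -⟩ := hM
  refine ⟨?_, ?_, ?_⟩
  · have hinj : Function.Injective M.diagMat.mulVecLin := fun v w h =>
      mulVec_inj_of_li hli h
    rw [Matrix.rank, LinearMap.finrank_range_of_inj hinj,
      Module.finrank_fintype_fun_eq_card, Fintype.card_fin]
  · intro s s' h
    exact sim_inj M hm hli (stateEquiv_iff.mp h).2.2
  · have hbij : Function.Bijective (fun T : (Matrix (Fin n) (Fin n) F)ˣ =>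
        (⟨lftConj M T, lftConj_equiv M T⟩ : {M' : LFT F ℓ m n // M'.Equiv M})) := by
      constructor
      · intro T₁ T₂ h12
        exact lftConj_injective M hm hli (congrArg Subtype.val h12)
      · rintro ⟨M', hM'⟩
        obtain ⟨T, hT⟩ := equiv_char M hm hli hM'
        exact ⟨T, Subtype.ext hT⟩
    rw [← Nat.card_eq_of_bijective _ hbij, Matrix.card_GL_field]
    exact Fin.prod_univ_eq_prod_range (fun i => Fintype.card F ^ n - Fintype.card F ^ i) n
end

section
/- Let q be a prime power and ℓ, m positive integers. For every linear finite transducer M over F_q with structural parameters ℓ, m, n there exists exactly one canonical linear finite transducer over F_q (of some size n' and with the same input parameter ℓ and output parameter m) that is equivalent to M. -/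
namespace LFTAux

open Matrix

variable {F : Type} [Field F] {ℓ m n n₁ n₂ n₃ : ℕ}

/-- Extensionality for matrices via `mulVec`. -/
lemma matrix_ext_mulVec {a c : ℕ} {X Y : Matrix (Fin a) (Fin c) F}
    (h : ∀ v, X.mulVec v = Y.mulVec v) : X = Y := by
  ext i j
  have := congrFun (h (Pi.single j 1)) i
  simpa [Matrix.mulVec_single] using this

lemma sum_mulVec {a c : ℕ} {ι : Type*} (s : Finset ι) (X : ι → Matrix (Fin a) (Fin c) F)
    (v : Fin c → F) : (∑ i ∈ s, X i).mulVec v = ∑ i ∈ s, (X i).mulVec v := by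
  funext r
  simp only [Matrix.mulVec, dotProduct, Finset.sum_apply, Matrix.sum_apply,
    Finset.sum_mul]
  rw [Finset.sum_comm]

/-- Output on an all-zero input word. -/
lemma lam_zero (M : LFT F ℓ m n) (k : ℕ) : ∀ s : Fin n → F,
    lambdaStar M.del M.out s (List.replicate k 0) =
      List.ofFn (fun i : Fin k => (M.C * M.A ^ (i : ℕ)).mulVec s) := by
  induction k with
  | zero => intro s; simp [lambdaStar]
  | succ k ih =>
    intro s
    rw [List.replicate_succ, List.ofFn_succ]
    show M.out s 0 :: lambdaStar M.del M.out (M.del s 0) (List.replicate k 0) = _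
    rw [ih]
    congr 1
    · simp [LFT.out]
    · congr 1
      funext i
      have hdel : M.del s 0 = M.A.mulVec s := by simp [LFT.del]
      rw [hdel, Matrix.mulVec_mulVec, Matrix.mul_assoc, ← pow_succ]
      rfl

/-- Equivalent states have equal observation sequences. -/
lemma stateEquiv_obs {M₁ : LFT F ℓ m n₁} {M₂ : LFT F ℓ m n₂} {s₁ : Fin n₁ → F}
    {s₂ : Fin n₂ → F} (h : M₁.StateEquiv M₂ s₁ s₂) (u : ℕ) :
    (M₁.C * M₁.A ^ u).mulVec s₁ = (M₂.C * M₂.A ^ u).mulVec s₂ := by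
  have h0 := h (List.replicate (u + 1) 0)
  rw [lam_zero, lam_zero] at h0
  exact congrFun (List.ofFn_inj.mp h0) ⟨u, Nat.lt_succ_self u⟩

/-- Simulation lemma: an intertwining matrix `P` yields state equivalences. -/
lemma stateEquiv_of_sim {M' : LFT F ℓ m n₁} {M : LFT F ℓ m n}
    (P : Matrix (Fin n₁) (Fin n) F)
    (hA : ∀ s, M'.A.mulVec (P.mulVec s) = P.mulVec (M.A.mulVec s))
    (hB : ∀ x, M'.B.mulVec x = P.mulVec (M.B.mulVec x))
    (hC : ∀ s, M'.C.mulVec (P.mulVec s) = M.C.mulVec s)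
    (hD : M'.D = M.D) (s : Fin n → F) : M'.StateEquiv M (P.mulVec s) s := by
  intro α
  induction α generalizing s with
  | nil => rfl
  | cons x α ih =>
    show M'.out (P.mulVec s) x :: lambdaStar _ _ (M'.del (P.mulVec s) x) α
        = M.out s x :: lambdaStar _ _ (M.del s x) α
    have hdel : M'.del (P.mulVec s) x = P.mulVec (M.del s x) := by
      simp [LFT.del, hA, hB, Matrix.mulVec_add]
    rw [hdel]
    congr 1
    · simp [LFT.out, hC, hD]
    · exact ih _

/-- An RREF family is linearly independent. -/
lemma rref_li {k N : ℕ} {b : Fin k → Fin N → F} (h : IsRREF b) :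
    LinearIndependent F b := by
  obtain ⟨p, -, h1, -⟩ := h
  rw [Fintype.linearIndependent_iff]
  intro g hg i
  have h0 := congrFun hg (p i)
  simp only [Finset.sum_apply, Pi.smul_apply, smul_eq_mul, Pi.zero_apply] at h0
  rw [Finset.sum_congr rfl (fun j _ => by rw [h1 i j])] at h0
  simpa using h0

/-- Elements of the span of an RREF family are recovered from their pivot coordinates. -/
lemma rref_repr {k N : ℕ} {b : Fin k → Fin N → F} {p : Fin k → Fin N}
    (h1 : ∀ i i' : Fin k, b i' (p i) = if i' = i then 1 else 0)
    {w : Fin N → F} (hw : w ∈ Submodule.span F (Set.range b)) :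
    w = fun c => ∑ j, w (p j) * b j c := by
  obtain ⟨c, hc⟩ := (Submodule.mem_span_range_iff_exists_fun F).mp hw
  have hcj : ∀ j, w (p j) = c j := by
    intro j
    rw [← hc]
    simp only [Finset.sum_apply, Pi.smul_apply, smul_eq_mul]
    rw [Finset.sum_congr rfl (fun l _ => by rw [h1 j l])]
    simp
  funext x
  rw [Finset.sum_congr rfl (fun j _ => by rw [hcj j]), ← hc]
  simp [Finset.sum_apply]

/-- Pivots of one RREF family lie among the pivots of another one spanning a larger space. -/
lemma rref_pivot_mem {k k' N : ℕ} {b : Fin k → Fin N → F} {b' : Fin k' → Fin N → F}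
    {p : Fin k → Fin N} {p' : Fin k' → Fin N}
    (hp : StrictMono p)
    (h1 : ∀ i i' : Fin k, b i' (p i) = if i' = i then 1 else 0)
    (h2 : ∀ (i : Fin k) (c : Fin N), (c : ℕ) < (p i : ℕ) → b i c = 0)
    (h1' : ∀ i i' : Fin k', b' i' (p' i) = if i' = i then 1 else 0)
    (h2' : ∀ (i : Fin k') (c : Fin N), (c : ℕ) < (p' i : ℕ) → b' i c = 0)
    (hle : ∀ i, b' i ∈ Submodule.span F (Set.range b))
    (i : Fin k') : p' i ∈ Set.range p := by
  classical
  have hw := rref_repr h1 (hle i)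
  have hone : b' i (p' i) = 1 := by simpa using h1' i i
  by_cases hS : ∃ j, b' i (p j) ≠ 0
  · set S : Finset (Fin k) := Finset.univ.filter (fun j => b' i (p j) ≠ 0) with hSdef
    have hSne : S.Nonempty := ⟨hS.choose, by simp [hSdef, hS.choose_spec]⟩
    set j₀ := S.min' hSne with hj₀def
    have hj₀ : b' i (p j₀) ≠ 0 := by
      have := S.min'_mem hSne
      simpa [hSdef] using this
    have hmin : ∀ j, b' i (p j) ≠ 0 → j₀ ≤ j := fun j hj => S.min'_le j (by simp [hSdef, hj])
    rcases lt_trichotomy (p' i) (p j₀) with hlt | heq | hgt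
    · exfalso
      have hzero : b' i (p' i) = 0 := by
        rw [congrFun hw (p' i)]
        refine Finset.sum_eq_zero fun j _ => ?_
        by_cases hj : b' i (p j) = 0
        · rw [hj, zero_mul]
        · have h3 : (p' i : ℕ) < (p j : ℕ) := lt_of_lt_of_le hlt (hp.monotone (hmin j hj))
          rw [h2 j (p' i) h3, mul_zero]
      rw [hone] at hzero
      exact one_ne_zero hzero
    · exact ⟨j₀, heq.symm⟩
    · exfalso
      exact hj₀ (h2' i (p j₀) hgt)
  · exfalso
    push_neg at hS
    have hzero : b' i (p' i) = 0 := by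
      rw [congrFun hw (p' i)]
      exact Finset.sum_eq_zero fun j _ => by rw [hS j, zero_mul]
    rw [hone] at hzero
    exact one_ne_zero hzero

/-- Uniqueness of the RREF basis of a subspace. -/
lemma rref_unique {k N : ℕ} {b b' : Fin k → Fin N → F}
    (hb : IsRREF b) (hb' : IsRREF b')
    (hspan : Submodule.span F (Set.range b) = Submodule.span F (Set.range b')) :
    b = b' := by
  obtain ⟨p, hp, h1, h2⟩ := hb
  obtain ⟨p', hp', h1', h2'⟩ := hb'
  have hmem' : ∀ i, b' i ∈ Submodule.span F (Set.range b) := by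
    intro i; rw [hspan]; exact Submodule.subset_span ⟨i, rfl⟩
  have hmem : ∀ i, b i ∈ Submodule.span F (Set.range b') := by
    intro i; rw [← hspan]; exact Submodule.subset_span ⟨i, rfl⟩
  have hr1 : ∀ i, p' i ∈ Set.range p := rref_pivot_mem hp h1 h2 h1' h2' hmem'
  have hr2 : ∀ i, p i ∈ Set.range p' := rref_pivot_mem hp' h1' h2' h1 h2 hmem
  have hpp : p = p' := by
    have inst : WellFoundedLT (Fin k) := by infer_instance
    refine (StrictMono.range_inj hp hp').mp ?_
    apply Set.Subset.antisymm
    · rintro x ⟨i, rfl⟩; exact hr2 i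
    · rintro x ⟨i, rfl⟩; exact hr1 i
  subst hpp
  funext i
  rw [rref_repr h1 (hmem' i)]
  funext x
  rw [Finset.sum_congr rfl (fun j _ => by rw [h1' j i])]
  simp

set_option synthInstance.maxHeartbeats 1000000 in
/-- Every subspace of `F^N` has an RREF basis. -/
lemma exists_rref_basis {N : ℕ} (k : ℕ) (W : Submodule F (Fin N → F))
    (hk : Module.finrank F W = k) :
    ∃ b : Fin k → Fin N → F, IsRREF b ∧ Submodule.span F (Set.range b) = W := by
  classical
  induction k generalizing W with
  | zero =>
    refine ⟨Fin.elim0, ⟨Fin.elim0, fun a => a.elim0, fun i => i.elim0, fun i => i.elim0⟩, ?_⟩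
    rw [show Set.range (Fin.elim0 : Fin 0 → Fin N → F) = ∅ from Set.range_eq_empty _]
    rw [Submodule.span_empty]
    exact (Submodule.finrank_eq_zero.mp hk).symm
  | succ k ih =>
    have hWne : W ≠ ⊥ := by
      intro h
      rw [h, finrank_bot] at hk
      exact Nat.succ_ne_zero k hk.symm
    obtain ⟨w₁, hw₁W, hw₁⟩ := Submodule.exists_mem_ne_zero_of_ne_bot hWne
    have hex : ∃ c : Fin N, ∃ w ∈ W, w c ≠ 0 := by
      by_contra hcon
      push_neg at hcon
      exact hw₁ (funext fun c => hcon c w₁ hw₁W)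
    set S : Finset (Fin N) := Finset.univ.filter (fun c => ∃ w ∈ W, w c ≠ 0) with hSdef
    have hSne : S.Nonempty := ⟨hex.choose, by simpa [hSdef] using hex.choose_spec⟩
    set c₀ := S.min' hSne with hc₀def
    obtain ⟨w₂, hw₂W, hw₂⟩ : ∃ w ∈ W, w c₀ ≠ 0 := by
      have := S.min'_mem hSne
      simpa [hSdef] using this
    have hlow : ∀ c : Fin N, c < c₀ → ∀ w ∈ W, w c = 0 := by
      intro c hc w hw
      by_contra hne
      have hcS : c ∈ S := by
        rw [hSdef]
        simp only [Finset.mem_filter, Finset.mem_univ, true_and]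
        exact ⟨w, hw, hne⟩
      exact absurd (S.min'_le c hcS) (not_le.mpr hc)
    set w₀ : Fin N → F := (w₂ c₀)⁻¹ • w₂ with hw₀def
    have hw₀W : w₀ ∈ W := W.smul_mem _ hw₂W
    have hw₀c₀ : w₀ c₀ = 1 := by
      simp only [hw₀def, Pi.smul_apply, smul_eq_mul]
      exact inv_mul_cancel₀ hw₂
    have hw₀low : ∀ c, c < c₀ → w₀ c = 0 := fun c hc => by
      simp [hw₀def, hlow c hc w₂ hw₂W]
    set W' : Submodule F (Fin N → F) :=
      W ⊓ LinearMap.ker (LinearMap.proj (R := F) (φ := fun _ : Fin N => F) c₀) with hW'def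
    have hW'le : W' ≤ W := inf_le_left
    have hW'mem : ∀ w, w ∈ W' ↔ (w ∈ W ∧ w c₀ = 0) := by
      intro w
      rw [hW'def, Submodule.mem_inf, LinearMap.mem_ker, LinearMap.proj_apply]
    have hW'rank : Module.finrank F W' = k := by
      set f : W →ₗ[F] F := (LinearMap.proj c₀).comp W.subtype with hfdef
      have hker : LinearMap.ker f = Submodule.comap W.subtype W' := by
        ext w
        simp [hfdef, hW'mem, w.2]
      have hrange : LinearMap.range f = ⊤ := by
        rw [LinearMap.range_eq_top]
        intro a
        refine ⟨a • ⟨w₀, hw₀W⟩, ?_⟩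
        simp [hfdef, hw₀c₀]
      have h1 := LinearMap.finrank_range_add_finrank_ker f
      rw [hrange, finrank_top, Module.finrank_self, hk, hker] at h1
      have h2 : Module.finrank F (Submodule.comap W.subtype W') = k := by omega
      exact ((Submodule.comapSubtypeEquivOfLe hW'le).finrank_eq).symm.trans h2
    obtain ⟨b', ⟨p', hp', h1', h2'⟩, hspan'⟩ := ih W' hW'rank
    have hb'W' : ∀ j, b' j ∈ W' := fun j => by
      rw [← hspan']; exact Submodule.subset_span ⟨j, rfl⟩
    have hb'W : ∀ j, b' j ∈ W := fun j => hW'le (hb'W' j)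
    have hb'c₀ : ∀ j, b' j c₀ = 0 := fun j => ((hW'mem _).mp (hb'W' j)).2
    have hb'low : ∀ j c, c < c₀ → b' j c = 0 := fun j c hc => hlow c hc _ (hb'W j)
    have hc₀p' : ∀ j, c₀ < p' j := by
      intro j
      rcases lt_trichotomy c₀ (p' j) with h | h | h
      · exact h
      · exfalso
        have hone := h1' j j
        rw [if_pos rfl, ← h, hb'c₀ j] at hone
        exact zero_ne_one hone
      · exfalso
        have hone := h1' j j
        rw [if_pos rfl, hb'low j (p' j) h] at hone
        exact zero_ne_one hone
    set b0 : Fin N → F := w₀ - ∑ j, w₀ (p' j) • b' j with hb0def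
    have hb0W : b0 ∈ W := W.sub_mem hw₀W (W.sum_mem fun j _ => W.smul_mem _ (hb'W j))
    have hb0_apply : ∀ c, b0 c = w₀ c - ∑ j, w₀ (p' j) * b' j c := by
      intro c
      simp [hb0def, Finset.sum_apply]
    have hb0c₀ : b0 c₀ = 1 := by
      rw [hb0_apply, Finset.sum_eq_zero (fun j _ => by rw [hb'c₀ j, mul_zero]), hw₀c₀, sub_zero]
    have hb0p' : ∀ l, b0 (p' l) = 0 := by
      intro l
      rw [hb0_apply, Finset.sum_congr rfl (fun j _ => by rw [h1' l j])]
      simp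
    have hb0low : ∀ c, c < c₀ → b0 c = 0 := by
      intro c hc
      rw [hb0_apply, hw₀low c hc,
        Finset.sum_eq_zero (fun j _ => by rw [hb'low j c hc, mul_zero]), sub_zero]
    set b : Fin (k+1) → Fin N → F := Fin.cons b0 b' with hbdef
    set p : Fin (k+1) → Fin N := Fin.cons c₀ p' with hpdef
    have hb_zero : b 0 = b0 := rfl
    have hb_succ : ∀ j, b j.succ = b' j := fun j => by simp [hbdef]
    have hp_zero : p 0 = c₀ := rfl
    have hp_succ : ∀ j, p j.succ = p' j := fun j => by simp [hpdef]
    have hpmono : StrictMono p := by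
      intro a c hac
      rcases Fin.eq_zero_or_eq_succ c with rfl | ⟨c', rfl⟩
      · exact absurd hac (by simp)
      · rcases Fin.eq_zero_or_eq_succ a with rfl | ⟨a', rfl⟩
        · rw [hp_zero, hp_succ]; exact hc₀p' c'
        · rw [hp_succ, hp_succ]
          exact hp' (by simpa using hac)
    refine ⟨b, ⟨p, hpmono, ?_, ?_⟩, ?_⟩
    · intro i i'
      rcases Fin.eq_zero_or_eq_succ i with rfl | ⟨i₁, rfl⟩
      · rcases Fin.eq_zero_or_eq_succ i' with rfl | ⟨i₂, rfl⟩
        · rw [hb_zero, hp_zero, if_pos rfl]; exact hb0c₀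
        · rw [hb_succ, hp_zero, if_neg (Fin.succ_ne_zero i₂)]
          exact hb'c₀ i₂
      · rcases Fin.eq_zero_or_eq_succ i' with rfl | ⟨i₂, rfl⟩
        · rw [hb_zero, hp_succ, if_neg (Fin.succ_ne_zero i₁).symm]
          exact hb0p' i₁
        · rw [hb_succ, hp_succ, h1' i₁ i₂]
          by_cases h : i₂ = i₁
          · subst h; simp
          · rw [if_neg h, if_neg (by simpa [Fin.succ_inj] using h)]
    · intro i c hc
      rcases Fin.eq_zero_or_eq_succ i with rfl | ⟨i₁, rfl⟩
      · rw [hb_zero]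
        rw [hp_zero] at hc
        exact hb0low c hc
      · rw [hb_succ]
        rw [hp_succ] at hc
        exact h2' i₁ c hc
    · apply le_antisymm
      · rw [Submodule.span_le]
        rintro x ⟨j, rfl⟩
        rcases Fin.eq_zero_or_eq_succ j with rfl | ⟨j₁, rfl⟩
        · rw [hb_zero]; exact hb0W
        · rw [hb_succ]; exact hb'W j₁
      · intro w hw
        have hsub : w - w c₀ • b0 ∈ W' := by
          rw [hW'mem]
          refine ⟨W.sub_mem hw (W.smul_mem _ hb0W), ?_⟩
          simp [hb0c₀]
        have hle : Submodule.span F (Set.range b') ≤ Submodule.span F (Set.range b) := by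
          apply Submodule.span_mono
          rintro x ⟨j, rfl⟩
          exact ⟨j.succ, (hb_succ j)⟩
        have hsub' : w - w c₀ • b0 ∈ Submodule.span F (Set.range b) := by
          apply hle
          rw [hspan']
          exact hsub
        have hb0mem : b0 ∈ Submodule.span F (Set.range b) :=
          Submodule.subset_span ⟨0, hb_zero⟩
        have := Submodule.add_mem _ hsub' (Submodule.smul_mem _ (w c₀) hb0mem)
        simpa using this

/-- Cayley–Hamilton: `A ^ n` is a combination of lower powers. -/
lemma pow_card_eq_sum (A : Matrix (Fin n) (Fin n) F) (hn : 0 < n) :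
    ∃ c : ℕ → F, A ^ n = ∑ i ∈ Finset.range n, c i • A ^ i := by
  classical
  set q : Polynomial F := Polynomial.X ^ n - A.charpoly with hq
  have hdeg : q.natDegree < n := by
    by_cases h0 : q = 0
    · rw [h0]; simpa using hn
    · have hd : q.degree < (n : ℕ) := by
        have hdd := Polynomial.degree_sub_lt
          (p := (Polynomial.X : Polynomial F) ^ n) (q := A.charpoly)
          (by rw [Polynomial.degree_X_pow, Matrix.charpoly_degree_eq_dim, Fintype.card_fin])
          (pow_ne_zero _ Polynomial.X_ne_zero)
          (by rw [Polynomial.leadingCoeff_X_pow, (Matrix.charpoly_monic A).leadingCoeff])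
        rw [Polynomial.degree_X_pow] at hdd
        exact hdd
      exact (Polynomial.natDegree_lt_iff_degree_lt h0).mpr hd
  refine ⟨fun i => q.coeff i, ?_⟩
  have h1 : Polynomial.aeval A q = ∑ i ∈ Finset.range n, q.coeff i • A ^ i :=
    Polynomial.aeval_eq_sum_range' hdeg A
  have h2 : Polynomial.aeval A q = A ^ n := by
    rw [hq, map_sub, Matrix.aeval_self_charpoly, sub_zero, map_pow, Polynomial.aeval_X]
  rw [← h2, h1]

/-- If the first `n` observations of a state vanish, they all do. -/
lemma obs_all_zero (M : LFT F ℓ m n) (hn : 0 < n) (v : Fin n → F)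
    (h : ∀ u, u < n → (M.C * M.A ^ u).mulVec v = 0) :
    ∀ u, (M.C * M.A ^ u).mulVec v = 0 := by
  obtain ⟨c, hc⟩ := pow_card_eq_sum M.A hn
  intro u
  induction u using Nat.strong_induction_on with
  | _ u ih =>
    by_cases hu : u < n
    · exact h u hu
    · push_neg at hu
      have hA : M.C * M.A ^ u = ∑ i ∈ Finset.range n, c i • (M.C * M.A ^ (i + (u - n))) := by
        have h3 : M.A ^ u = M.A ^ n * M.A ^ (u - n) := by
          rw [← pow_add]
          congr 1
          omega
        rw [h3, hc, Finset.sum_mul, Matrix.mul_sum]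
        refine Finset.sum_congr rfl fun i hi => ?_
        rw [Matrix.smul_mul, ← pow_add, Matrix.mul_smul]
      rw [hA, sum_mulVec]
      refine Finset.sum_eq_zero fun i hi => ?_
      rw [Matrix.smul_mulVec,
        ih (i + (u - n)) (by have := Finset.mem_range.mp hi; omega), smul_zero]

lemma diagMat_apply_entry (M : LFT F ℓ m n) (i : Fin (n*m)) (u : ℕ) (s : Fin m)
    (hi : (i : ℕ) = m * u + (s : ℕ)) (j : Fin n) :
    M.diagMat i j = (M.C * M.A ^ u) s j := by
  have hm : 0 < m := s.pos
  have e1 : (i : ℕ) / m = u := by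
    rw [hi, Nat.mul_add_div hm, Nat.div_eq_of_lt s.isLt, add_zero]
  have e2 : (i : ℕ) % m = (s : ℕ) := by
    rw [hi, Nat.mul_add_mod, Nat.mod_eq_of_lt s.isLt]
  have key : ∀ (u' : ℕ) (s' : Fin m), u' = u → (s' : ℕ) = (s : ℕ) →
      (M.C * M.A ^ u') s' j = (M.C * M.A ^ u) s j := by
    intro u' s' h1 h2
    subst h1
    rw [Fin.ext h2]
  simp only [LFT.diagMat, Matrix.of_apply]
  exact key _ _ e1 e2

lemma diag_mulVec_entry (M : LFT F ℓ m n) (v : Fin n → F) (i : Fin (n*m)) (u : ℕ) (s : Fin m)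
    (hi : (i : ℕ) = m * u + (s : ℕ)) :
    M.diagMat.mulVec v i = ((M.C * M.A ^ u).mulVec v) s := by
  simp only [Matrix.mulVec, dotProduct]
  exact Finset.sum_congr rfl fun j _ => by rw [diagMat_apply_entry M i u s hi j]

lemma index_decomp {a : ℕ} (i : Fin (a * m)) :
    ∃ (u : ℕ) (s : Fin m), (i : ℕ) = m * u + (s : ℕ) ∧ u < a := by
  have hm : 0 < m := by
    rcases Nat.eq_zero_or_pos m with h | h
    · exfalso
      have hlt := i.isLt
      have h0 : a * m = a * 0 := by rw [h]
      rw [Nat.mul_zero] at h0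
      omega
    · exact h
  refine ⟨(i : ℕ) / m, ⟨(i : ℕ) % m, Nat.mod_lt _ hm⟩, (Nat.div_add_mod (i : ℕ) m).symm, ?_⟩
  rw [Nat.div_lt_iff_lt_mul hm]
  exact i.isLt

lemma diag_mulVec_eq_zero_iff (M : LFT F ℓ m n) (v : Fin n → F) :
    M.diagMat.mulVec v = 0 ↔ ∀ u, u < n → (M.C * M.A ^ u).mulVec v = 0 := by
  constructor
  · intro h u hu
    funext s
    have hidx : m * u + (s : ℕ) < n * m := by
      calc m * u + (s : ℕ) < m * u + m := by omega
        _ = m * (u + 1) := by ring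
        _ ≤ m * n := Nat.mul_le_mul_left m hu
        _ = n * m := Nat.mul_comm m n
    have h0 := congrFun h (⟨m * u + (s : ℕ), hidx⟩ : Fin (n * m))
    rw [diag_mulVec_entry M v ⟨m * u + (s : ℕ), hidx⟩ u s rfl] at h0
    exact h0
  · intro h
    funext i
    obtain ⟨u, s, hi, hu⟩ := index_decomp i
    rw [diag_mulVec_entry M v i u s hi, h u hu]
    rfl

/-- If the first `r` observations vanish (`r` the rank of the diagnostic matrix),
then the whole diagnostic matrix kills the vector. -/
lemma trunc_zero (M : LFT F ℓ m n) (hn : 0 < n) (v : Fin n → F)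
    (hv : ∀ u, u < Module.finrank F (LinearMap.range (Matrix.mulVecLin M.diagMat)) →
      (M.C * M.A ^ u).mulVec v = 0) :
    M.diagMat.mulVec v = 0 := by
  classical
  set r := Module.finrank F (LinearMap.range (Matrix.mulVecLin M.diagMat)) with hrdef
  let K : ℕ → Submodule F (Fin n → F) := fun t =>
    { carrier := { w | ∀ u, u < t → (M.C * M.A ^ u).mulVec w = 0 }
      add_mem' := fun ha hb u hu => by
        rw [Matrix.mulVec_add, ha u hu, hb u hu, add_zero]
      zero_mem' := fun u hu => Matrix.mulVec_zero _
      smul_mem' := fun a x hx u hu => by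
        rw [Matrix.mulVec_smul, hx u hu, smul_zero] }
  have hKmem : ∀ t w, w ∈ K t ↔ ∀ u, u < t → (M.C * M.A ^ u).mulVec w = 0 :=
    fun t w => Iff.rfl
  have hKmono : ∀ t, K (t+1) ≤ K t := fun t w hw u hu => hw u (by omega)
  have hstep : ∀ t, K t = K (t+1) → K (t+1) = K (t+2) := by
    intro t ht
    refine le_antisymm ?_ (hKmono (t+1))
    intro w hw u hu
    by_cases h' : u < t + 1
    · exact hw u h'
    · have hu2 : u = t + 1 := by omega
      subst hu2
      have hAw : M.A.mulVec w ∈ K t := by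
        intro u' hu'
        rw [Matrix.mulVec_mulVec, Matrix.mul_assoc, ← pow_succ]
        exact hw (u' + 1) (by omega)
      rw [ht] at hAw
      have h5 := hAw t (by omega)
      rw [Matrix.mulVec_mulVec, Matrix.mul_assoc, ← pow_succ] at h5
      exact h5
  have hconst : ∀ t, K t = K (t+1) → ∀ d, K (t + d) = K t ∧ K (t + d) = K (t + d + 1) := by
    intro t ht d
    induction d with
    | zero => exact ⟨rfl, ht⟩
    | succ d ihd =>
      obtain ⟨e1, e2⟩ := ihd
      refine ⟨?_, ?_⟩
      · rw [show t + (d+1) = t + d + 1 from rfl, ← e2, e1]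
      · rw [show t + (d+1) = t + d + 1 from rfl]
        exact hstep (t + d) e2
  have hstab : ∀ t, K t = K (t+1) → ∀ u, t ≤ u → K u = K t := by
    intro t ht u hu
    have := (hconst t ht (u - t)).1
    rwa [show t + (u - t) = u by omega] at this
  have hKtop : K 0 = ⊤ := by
    apply le_antisymm le_top
    intro w _ u hu
    omega
  have hKnker : K n = LinearMap.ker (Matrix.mulVecLin M.diagMat) := by
    ext w
    rw [hKmem, LinearMap.mem_ker, Matrix.mulVecLin_apply]
    exact (diag_mulVec_eq_zero_iff M w).symm
  have hrn : r ≤ n := by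
    have := LinearMap.finrank_range_le (Matrix.mulVecLin M.diagMat)
    rwa [Module.finrank_pi, Fintype.card_fin] at this
  have hkerrank : Module.finrank F (K n) = n - r := by
    have h6 := LinearMap.finrank_range_add_finrank_ker (Matrix.mulVecLin M.diagMat)
    rw [Module.finrank_pi, Fintype.card_fin, ← hrdef] at h6
    rw [hKnker]
    omega
  have hKr : K r = K n := by
    by_cases hcase : ∃ t, t < r ∧ K t = K (t+1)
    · obtain ⟨t, htr, ht⟩ := hcase
      rw [hstab t ht r (by omega), hstab t ht n (by omega)]
    · push_neg at hcase
      have hdrop : ∀ t, t ≤ r → Module.finrank F (K t) ≤ n - t := by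
        intro t
        induction t with
        | zero =>
          intro _
          rw [hKtop, finrank_top, Module.finrank_pi, Fintype.card_fin]
          omega
        | succ t iht =>
          intro htr
          have hlt : K (t+1) < K t :=
            lt_of_le_of_ne (hKmono t) (fun he => hcase t (by omega) he.symm)
          have h7 := Submodule.finrank_lt_finrank_of_lt hlt
          have h8 := iht (by omega)
          omega
      have h9 := hdrop r le_rfl
      have h10 : K n ≤ K r := fun w hw u hu => hw u (by omega)
      exact (Submodule.eq_of_le_of_finrank_le h10 (by omega)).symm
  have hv' : v ∈ K r := fun u hu => hv u hu
  rw [hKr, hKnker, LinearMap.mem_ker, Matrix.mulVecLin_apply] at hv'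
  exact hv'

/-- Linear independence of columns means `mulVec` has trivial kernel. -/
lemma li_cols_inj {a c : ℕ} {X : Matrix (Fin a) (Fin c) F}
    (h : LinearIndependent F (fun j : Fin c => fun i : Fin a => X i j))
    {v : Fin c → F} (hv : X.mulVec v = 0) : v = 0 := by
  rw [Fintype.linearIndependent_iff] at h
  funext j
  refine h v ?_ j
  funext i
  have h0 := congrFun hv i
  simp only [Matrix.mulVec, dotProduct, Pi.zero_apply] at h0
  simp only [Finset.sum_apply, Pi.smul_apply, smul_eq_mul, Pi.zero_apply]
  rw [Finset.sum_congr rfl fun j _ => mul_comm (v j) (X i j)]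
  exact h0

/-- The span of the columns of a matrix is the range of `mulVec`. -/
lemma span_cols_eq_range {a c : ℕ} (X : Matrix (Fin a) (Fin c) F) :
    Submodule.span F (Set.range (fun j : Fin c => fun i : Fin a => X i j)) =
      LinearMap.range X.mulVecLin := by
  apply le_antisymm
  · rw [Submodule.span_le]
    rintro x ⟨j, rfl⟩
    refine ⟨Pi.single j 1, ?_⟩
    rw [Matrix.mulVecLin_apply]
    funext i
    simp [Matrix.mulVec_single]
  · rintro x ⟨v, rfl⟩
    rw [Matrix.mulVecLin_apply]
    have hX : X.mulVec v = ∑ j, v j • (fun i : Fin a => X i j) := by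
      funext i
      simp only [Matrix.mulVec, dotProduct, Finset.sum_apply, Pi.smul_apply,
        smul_eq_mul]
      exact Finset.sum_congr rfl fun j _ => mul_comm (X i j) (v j)
    rw [hX]
    exact Submodule.sum_mem _ fun j _ =>
      Submodule.smul_mem _ _ (Submodule.subset_span ⟨j, rfl⟩)

lemma equiv_symm {M₁ : LFT F ℓ m n₁} {M₂ : LFT F ℓ m n₂} (h : M₁.Equiv M₂) : M₂.Equiv M₁ :=
  ⟨fun s₂ => (h.2 s₂).imp (fun _ hs => fun α => (hs α).symm),
   fun s₁ => (h.1 s₁).imp (fun _ hs => fun α => (hs α).symm)⟩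

lemma equiv_trans {M₁ : LFT F ℓ m n₁} {M₂ : LFT F ℓ m n₂} {M₃ : LFT F ℓ m n₃}
    (h : M₁.Equiv M₂) (h' : M₂.Equiv M₃) : M₁.Equiv M₃ := by
  constructor
  · intro s₁
    obtain ⟨s₂, h12⟩ := h.1 s₁
    obtain ⟨s₃, h23⟩ := h'.1 s₂
    exact ⟨s₃, fun α => (h12 α).trans (h23 α)⟩
  · intro s₃
    obtain ⟨s₂, h23⟩ := h'.2 s₃
    obtain ⟨s₁, h12⟩ := h.2 s₂
    exact ⟨s₁, fun α => (h12 α).trans (h23 α)⟩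

/-- Two equivalent canonical transducers are equal. -/
lemma canonical_eq [Fintype F] {M₁ : LFT F ℓ m n₁} {M₂ : LFT F ℓ m n₂}
    (h₁ : M₁.IsCanonical) (h₂ : M₂.IsCanonical) (h : M₁.Equiv M₂) :
    (⟨n₁, M₁⟩ : (n' : ℕ) × LFT F ℓ m n') = ⟨n₂, M₂⟩ := by
  classical
  have inj₁ : ∀ v, M₁.diagMat.mulVec v = 0 → v = 0 := fun v hv => li_cols_inj h₁.1 hv
  have inj₂ : ∀ v, M₂.diagMat.mulVec v = 0 → v = 0 := fun v hv => li_cols_inj h₂.1 hv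
  have obs_inj₁ : ∀ t t' : Fin n₁ → F,
      (∀ u, (M₁.C * M₁.A ^ u).mulVec t = (M₁.C * M₁.A ^ u).mulVec t') → t = t' := by
    intro t t' ht
    have h0 : M₁.diagMat.mulVec (t - t') = 0 := by
      rw [diag_mulVec_eq_zero_iff]
      intro u _
      rw [Matrix.mulVec_sub, ht u, sub_self]
    exact sub_eq_zero.mp (inj₁ _ h0)
  have obs_inj₂ : ∀ t t' : Fin n₂ → F,
      (∀ u, (M₂.C * M₂.A ^ u).mulVec t = (M₂.C * M₂.A ^ u).mulVec t') → t = t' := by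
    intro t t' ht
    have h0 : M₂.diagMat.mulVec (t - t') = 0 := by
      rw [diag_mulVec_eq_zero_iff]
      intro u _
      rw [Matrix.mulVec_sub, ht u, sub_self]
    exact sub_eq_zero.mp (inj₂ _ h0)
  choose φ hφ using h.1
  choose ψ hψ using h.2
  have hφinj : Function.Injective φ := by
    intro s s' he
    refine obs_inj₁ s s' fun u => ?_
    have ha := stateEquiv_obs (hφ s) u
    have hb := stateEquiv_obs (hφ s') u
    rw [he] at ha
    rw [ha, hb]
  have hφsurj : Function.Surjective φ := by
    intro t
    refine ⟨ψ t, obs_inj₂ _ _ fun u => ?_⟩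
    rw [← stateEquiv_obs (hφ (ψ t)) u, stateEquiv_obs (hψ t) u]
  have hcard := Fintype.card_congr (Equiv.ofBijective φ ⟨hφinj, hφsurj⟩)
  rw [Fintype.card_fun, Fintype.card_fun, Fintype.card_fin, Fintype.card_fin] at hcard
  have hn12 : n₁ = n₂ := Nat.pow_right_injective Fintype.one_lt_card hcard
  subst hn12
  have hΔ12 : ∀ s, M₁.diagMat.mulVec s = M₂.diagMat.mulVec (φ s) := by
    intro s
    funext i
    obtain ⟨u, sm, hi, hu⟩ := index_decomp i
    rw [diag_mulVec_entry M₁ s i u sm hi, diag_mulVec_entry M₂ (φ s) i u sm hi,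
      stateEquiv_obs (hφ s) u]
  have hΔ21 : ∀ t, M₂.diagMat.mulVec t = M₁.diagMat.mulVec (ψ t) := by
    intro t
    funext i
    obtain ⟨u, sm, hi, hu⟩ := index_decomp i
    rw [diag_mulVec_entry M₂ t i u sm hi, diag_mulVec_entry M₁ (ψ t) i u sm hi,
      stateEquiv_obs (hψ t) u]
  have hspan : Submodule.span F (Set.range (fun j : Fin n₁ => fun i : Fin (n₁ * m) => M₁.diagMat i j)) =
      Submodule.span F (Set.range (fun j : Fin n₁ => fun i : Fin (n₁ * m) => M₂.diagMat i j)) := by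
    rw [span_cols_eq_range, span_cols_eq_range]
    apply le_antisymm
    · rintro x ⟨v, rfl⟩
      refine ⟨φ v, ?_⟩
      rw [Matrix.mulVecLin_apply, Matrix.mulVecLin_apply]
      exact (hΔ12 v).symm
    · rintro x ⟨v, rfl⟩
      refine ⟨ψ v, ?_⟩
      rw [Matrix.mulVecLin_apply, Matrix.mulVecLin_apply]
      exact (hΔ21 v).symm
  have hcols := rref_unique h₁.2 h₂.2 hspan
  have hΔeq : M₁.diagMat = M₂.diagMat := by
    ext i j
    exact congrFun (congrFun hcols j) i
  have hφid : ∀ s, φ s = s := by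
    intro s
    have heq2 : M₂.diagMat.mulVec (φ s) = M₂.diagMat.mulVec s := by
      rw [← hΔ12 s, hΔeq]
    have h0 : M₂.diagMat.mulVec (φ s - s) = 0 := by
      rw [Matrix.mulVec_sub, heq2, sub_self]
    exact sub_eq_zero.mp (inj₂ _ h0)
  have hSE : ∀ s, M₁.StateEquiv M₂ s s := by
    intro s
    have hs := hφ s
    rwa [hφid s] at hs
  have hCA : ∀ u, M₁.C * M₁.A ^ u = M₂.C * M₂.A ^ u := fun u =>
    matrix_ext_mulVec fun v => stateEquiv_obs (hSE v) u
  have hC : M₁.C = M₂.C := by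
    have h0 := hCA 0
    rwa [pow_zero, pow_zero, Matrix.mul_one, Matrix.mul_one] at h0
  have hA : M₁.A = M₂.A := by
    refine matrix_ext_mulVec fun v => obs_inj₂ _ _ fun u => ?_
    rw [Matrix.mulVec_mulVec, Matrix.mulVec_mulVec]
    have hm1 : M₂.C * M₂.A ^ u * M₁.A = M₂.C * M₂.A ^ u * M₂.A :=
      calc M₂.C * M₂.A ^ u * M₁.A
          = M₁.C * M₁.A ^ u * M₁.A := by rw [hCA u]
        _ = M₁.C * M₁.A ^ (u+1) := by rw [pow_succ, Matrix.mul_assoc]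
        _ = M₂.C * M₂.A ^ (u+1) := hCA (u+1)
        _ = M₂.C * M₂.A ^ u * M₂.A := by rw [pow_succ, Matrix.mul_assoc]
    rw [hm1]
  have hSE00 := hSE 0
  have hD : M₁.D = M₂.D := by
    refine matrix_ext_mulVec fun x => ?_
    have h0 := hSE00 [x]
    simp only [lambdaStar, List.cons.injEq, and_true] at h0
    simpa [LFT.out, Matrix.mulVec_zero] using h0
  have hB : M₁.B = M₂.B := by
    refine matrix_ext_mulVec fun x => obs_inj₂ _ _ fun u => ?_
    have h0 := hSE00 (x :: List.replicate (u+1) 0)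
    have hexp : ∀ (Mx : LFT F ℓ m n₁),
        lambdaStar Mx.del Mx.out 0 (x :: List.replicate (u+1) 0) =
          Mx.out 0 x :: lambdaStar Mx.del Mx.out (Mx.del 0 x) (List.replicate (u+1) 0) :=
      fun Mx => rfl
    rw [hexp M₁, hexp M₂, lam_zero, lam_zero] at h0
    have hdel : ∀ (Mx : LFT F ℓ m n₁), Mx.del 0 x = Mx.B.mulVec x := by
      intro Mx
      simp [LFT.del]
    rw [hdel M₁, hdel M₂] at h0
    have htail := (List.cons.injEq _ _ _ _ ▸ h0).2
    have h3 := congrFun (List.ofFn_inj.mp htail) ⟨u, Nat.lt_succ_self u⟩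
    simp only at h3
    rwa [hCA u] at h3
  refine congrArg (Sigma.mk n₁) ?_
  cases M₁
  cases M₂
  simp only [LFT.mk.injEq]
  exact ⟨hA, hB, hC, hD⟩

/-- Existence of an equivalent canonical transducer. -/
lemma exists_canonical (hm : 0 < m) (hn : 0 < n) (M : LFT F ℓ m n) :
    ∃ (r : ℕ) (M' : LFT F ℓ m r), M'.IsCanonical ∧ M'.Equiv M := by
  classical
  set Δ := M.diagMat with hΔdef
  set W := LinearMap.range Δ.mulVecLin with hWdef
  set r := Module.finrank F W with hrdef
  obtain ⟨b, hbR, hbspan⟩ := exists_rref_basis r W rfl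
  obtain ⟨p, hpmono, h1, h2⟩ := hbR
  have hbW : ∀ j, b j ∈ W := fun j => by
    rw [← hbspan]; exact Submodule.subset_span ⟨j, rfl⟩
  have hbW' : ∀ j, ∃ v, Δ.mulVec v = b j := by
    intro j
    obtain ⟨v, hv⟩ := hbW j
    exact ⟨v, by rwa [← Matrix.mulVecLin_apply]⟩
  choose e he using hbW'
  have hrn : r ≤ n := by
    have := LinearMap.finrank_range_le Δ.mulVecLin
    rwa [Module.finrank_pi, Fintype.card_fin] at this
  set P : Matrix (Fin r) (Fin n) F := Matrix.of (fun j k => Δ (p j) k) with hPdef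
  set E : Matrix (Fin n) (Fin r) F := Matrix.of (fun k j => e j k) with hEdef
  have hPapp : ∀ (v : Fin n → F) (j : Fin r), P.mulVec v j = Δ.mulVec v (p j) := by
    intro v j
    simp [hPdef, Matrix.mulVec, dotProduct]
  have hEapp : ∀ z : Fin r → F, Δ.mulVec (E.mulVec z) = ∑ j, z j • b j := by
    intro z
    have hEz : E.mulVec z = ∑ j, z j • e j := by
      funext kk
      simp only [Matrix.mulVec, dotProduct, Finset.sum_apply, Pi.smul_apply,
        smul_eq_mul, hEdef, Matrix.of_apply]
      exact Finset.sum_congr rfl fun j _ => mul_comm _ _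
    rw [hEz, ← Matrix.mulVecLin_apply, map_sum]
    refine Finset.sum_congr rfl fun j _ => ?_
    rw [_root_.map_smul, Matrix.mulVecLin_apply, he j]
  have hmemW : ∀ v, Δ.mulVec v ∈ Submodule.span F (Set.range b) := by
    intro v
    rw [hbspan]
    exact ⟨v, Matrix.mulVecLin_apply _ _⟩
  have hΔEP : ∀ v, Δ.mulVec (E.mulVec (P.mulVec v)) = Δ.mulVec v := by
    intro v
    rw [hEapp]
    have hrep := rref_repr h1 (hmemW v)
    funext c
    calc (∑ j, P.mulVec v j • b j) c = ∑ j, Δ.mulVec v (p j) * b j c := by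
          simp [Finset.sum_apply, hPapp]
      _ = Δ.mulVec v c := (congrFun hrep c).symm
  have hPE : ∀ z, P.mulVec (E.mulVec z) = z := by
    intro z
    funext j
    rw [hPapp, hEapp]
    simp only [Finset.sum_apply, Pi.smul_apply, smul_eq_mul]
    rw [Finset.sum_congr rfl (fun l _ => by rw [h1 j l])]
    simp
  have hker : ∀ v, Δ.mulVec v = 0 → ∀ u, (M.C * M.A ^ u).mulVec v = 0 := by
    intro v hv
    exact obs_all_zero M hn v ((diag_mulVec_eq_zero_iff M v).mp hv)
  have hCAEP : ∀ (u : ℕ) (v : Fin n → F),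
      (M.C * M.A ^ u).mulVec (E.mulVec (P.mulVec v)) = (M.C * M.A ^ u).mulVec v := by
    intro u v
    have hw : Δ.mulVec (E.mulVec (P.mulVec v) - v) = 0 := by
      rw [Matrix.mulVec_sub, hΔEP, sub_self]
    have h0 := hker _ hw u
    rw [Matrix.mulVec_sub] at h0
    exact sub_eq_zero.mp h0
  have hCAEPmat : ∀ u : ℕ, M.C * M.A ^ u * E * P = M.C * M.A ^ u := by
    intro u
    refine matrix_ext_mulVec fun v => ?_
    rw [← Matrix.mulVec_mulVec, ← Matrix.mulVec_mulVec]
    exact hCAEP u v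
  set M' : LFT F ℓ m r := ⟨P * M.A * E, P * M.B, M.C * E, M.D⟩ with hM'def
  have hS : ∀ u : ℕ, M'.C * M'.A ^ u = M.C * M.A ^ u * E := by
    intro u
    induction u with
    | zero => rw [pow_zero, pow_zero, Matrix.mul_one, Matrix.mul_one]
    | succ u ihu =>
      calc M'.C * M'.A ^ (u + 1)
          = M'.C * M'.A ^ u * M'.A := by rw [pow_succ, ← Matrix.mul_assoc]
        _ = M.C * M.A ^ u * E * (P * M.A * E) := by rw [ihu]
        _ = M.C * M.A ^ u * E * (P * M.A) * E := (Matrix.mul_assoc _ _ _).symm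
        _ = M.C * M.A ^ u * E * P * M.A * E := by
              rw [← Matrix.mul_assoc (M.C * M.A ^ u * E) P M.A]
        _ = M.C * M.A ^ u * M.A * E := by rw [hCAEPmat u]
        _ = M.C * M.A ^ (u + 1) * E := by
              rw [Matrix.mul_assoc M.C (M.A ^ u) M.A, ← pow_succ]
  have hsimA : ∀ s, M'.A.mulVec (P.mulVec s) = P.mulVec (M.A.mulVec s) := by
    intro s
    show (P * M.A * E).mulVec (P.mulVec s) = _
    rw [← Matrix.mulVec_mulVec, ← Matrix.mulVec_mulVec]
    funext j
    rw [hPapp, hPapp]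
    have hw : Δ.mulVec (E.mulVec (P.mulVec s) - s) = 0 := by
      rw [Matrix.mulVec_sub, hΔEP, sub_self]
    have hobs := hker _ hw
    have hAw : Δ.mulVec (M.A.mulVec (E.mulVec (P.mulVec s) - s)) = 0 := by
      rw [diag_mulVec_eq_zero_iff]
      intro u hu
      rw [Matrix.mulVec_mulVec, Matrix.mul_assoc, ← pow_succ]
      exact hobs (u+1)
    rw [Matrix.mulVec_sub, Matrix.mulVec_sub] at hAw
    have h0 := sub_eq_zero.mp hAw
    exact congrFun h0 (p j)
  have hsimB : ∀ x, M'.B.mulVec x = P.mulVec (M.B.mulVec x) := by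
    intro x
    show (P * M.B).mulVec x = _
    rw [← Matrix.mulVec_mulVec]
  have hsimC : ∀ s, M'.C.mulVec (P.mulVec s) = M.C.mulVec s := by
    intro s
    show (M.C * E).mulVec (P.mulVec s) = _
    rw [← Matrix.mulVec_mulVec]
    have h0 := hCAEP 0 s
    rw [pow_zero, Matrix.mul_one] at h0
    exact h0
  have hsim := stateEquiv_of_sim (M' := M') (M := M) P hsimA hsimB hsimC rfl
  have heqv : M'.Equiv M := by
    constructor
    · intro z
      refine ⟨E.mulVec z, ?_⟩
      have h0 := hsim (E.mulVec z)
      rwa [hPE z] at h0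
    · intro s
      exact ⟨P.mulVec s, hsim s⟩
  have hrm_le : r * m ≤ n * m := Nat.mul_le_mul_right m hrn
  have hplt : ∀ j, (p j : ℕ) < r * m := by
    intro j
    by_contra hge
    push_neg at hge
    have h0 : Δ.mulVec (e j) = 0 := by
      apply trunc_zero M hn
      intro u hu
      rw [← hΔdef, ← hWdef, ← hrdef] at hu
      funext s
      have hidx : m * u + (s : ℕ) < n * m := by
        calc m * u + (s : ℕ) < m * u + m := by omega
          _ = m * (u + 1) := by ring
          _ ≤ m * n := Nat.mul_le_mul_left m (by omega)
          _ = n * m := Nat.mul_comm m n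
      have hrow := diag_mulVec_entry M (e j) ⟨m * u + (s : ℕ), hidx⟩ u s rfl
      rw [← hΔdef] at hrow
      rw [← hrow, he j]
      refine h2 j ⟨m * u + (s : ℕ), hidx⟩ ?_
      have hlt2 : m * u + (s : ℕ) < r * m := by
        calc m * u + (s : ℕ) < m * u + m := by omega
          _ = m * (u + 1) := by ring
          _ ≤ m * r := Nat.mul_le_mul_left m (by omega)
          _ = r * m := Nat.mul_comm m r
      show m * u + (s : ℕ) < (p j : ℕ)
      omega
    have hone := h1 j j
    rw [if_pos rfl, ← he j, h0] at hone
    have hz : (0 : F) = 1 := by simpa using hone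
    exact zero_ne_one hz
  have hdiag' : ∀ (i : Fin (r * m)) (j : Fin r),
      M'.diagMat i j = b j ⟨(i : ℕ), lt_of_lt_of_le i.isLt hrm_le⟩ := by
    intro i j
    obtain ⟨u, s, hi, hu⟩ := index_decomp i
    rw [diagMat_apply_entry M' i u s hi, hS u]
    have h4 : (M.C * M.A ^ u * E) s j = ((M.C * M.A ^ u).mulVec (e j)) s := by
      simp only [Matrix.mul_apply, Matrix.mulVec, dotProduct, hEdef, Matrix.of_apply]
    rw [h4, ← diag_mulVec_entry M (e j) ⟨(i : ℕ), lt_of_lt_of_le i.isLt hrm_le⟩ u s hi,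
      ← hΔdef, he j]
  have hRREF' : IsRREF (fun j : Fin r => fun i : Fin (r * m) => M'.diagMat i j) := by
    refine ⟨fun j => ⟨(p j : ℕ), hplt j⟩, ?_, ?_, ?_⟩
    · intro a c hac
      exact Fin.lt_def.mpr (Fin.lt_def.mp (hpmono hac))
    · intro i i'
      show M'.diagMat ⟨(p i : ℕ), hplt i⟩ i' = _
      rw [hdiag']
      have heq : (⟨((⟨(p i : ℕ), hplt i⟩ : Fin (r * m)) : ℕ),
          lt_of_lt_of_le (hplt i) hrm_le⟩ : Fin (n * m)) = p i := Fin.ext rfl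
      rw [heq]
      exact h1 i i'
    · intro i c hc
      show M'.diagMat c i = 0
      rw [hdiag']
      exact h2 i ⟨(c : ℕ), lt_of_lt_of_le c.isLt hrm_le⟩ (by simpa using hc)
  exact ⟨r, M', ⟨rref_li hRREF', hRREF'⟩, heqv⟩

end LFTAux

/-- every LFT over `F_q` (`q = |F|` a prime power) with structural
parameters `ℓ, m, n` is equivalent to exactly one canonical LFT (of some size `n'`,
with the same input and output parameters `ℓ` and `m`). -/
theorem existsUnique_canonical_equiv {F : Type} [Field F] [Fintype F] {ℓ m n : ℕ}
    (hℓ : 0 < ℓ) (hm : 0 < m) (hn : 0 < n) (M : LFT F ℓ m n) :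
    ∃! M' : (n' : ℕ) × LFT F ℓ m n', M'.2.IsCanonical ∧ LFT.Equiv M'.2 M := by
  obtain ⟨r, M', hcan, heqv⟩ := LFTAux.exists_canonical hm hn M
  refine ⟨⟨r, M'⟩, ⟨hcan, heqv⟩, ?_⟩
  rintro ⟨k, Mk⟩ ⟨hkcan, hkeqv⟩
  exact LFTAux.canonical_eq hkcan hcan
    (LFTAux.equiv_trans hkeqv (LFTAux.equiv_symm heqv))
end

section
/- Let F be a field and let M be the linear finite transducer over F with structural matrices A ∈ M_{n×n}(F), B ∈ M_{n×ℓ}(F), C ∈ M_{m×n}(F), D ∈ M_{m×ℓ}(F), and let H(z) = C(I − Az)^{−1}Bz + D ∈ M_{m×ℓ}(F[[z]]) be its transfer function matrix. Let τ ∈ ℕ. Then M is injective with delay τ if and only if there exists a matrix H' ∈ M_{ℓ×m}(F[[z]]), all of whose entries lie in the image of the canonical embedding F[z]_S → F[[z]] (where S = 1 + zF[z]), such that H'·H = z^τ·I_ℓ. -/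
/-- A transducer is injective with delay `τ` (`τ`-injective) if for every state `s`,
inputs `x, x''` and input words `α, α''` of length `τ`, `λ(s, xα) = λ(s, x''α'')` implies
`x = x''`. -/
def TauInjective {X Y S : Type*} (δ : S → X → S) (lam : S → X → Y) (τ : ℕ) : Prop :=
  ∀ (s : S) (x x'' : X) (α α'' : List X), α.length = τ → α''.length = τ →
    lambdaStar δ lam s (x :: α) = lambdaStar δ lam s (x'' :: α'') → x = x''

/-- The matrix `Az` over `F[[z]]` associated to a square matrix `A` over `F`. -/
noncomputable def zMat {F : Type} [Field F] {n : ℕ} (A : Matrix (Fin n) (Fin n) F) :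
    Matrix (Fin n) (Fin n) (PowerSeries F) :=
  (PowerSeries.X : PowerSeries F) • A.map (PowerSeries.C (R := F))

/-- The transfer function matrix `H(z) = C (I − Az)⁻¹ B z + D` of an LFT (the matrix
`I − Az` is invertible over `F[[z]]` since its constant term is the identity). -/
noncomputable def transferMat {F : Type} [Field F] {ℓ m n : ℕ}
    (A : Matrix (Fin n) (Fin n) F) (B : Matrix (Fin n) (Fin ℓ) F)
    (C : Matrix (Fin m) (Fin n) F) (D : Matrix (Fin m) (Fin ℓ) F) :
    Matrix (Fin m) (Fin ℓ) (PowerSeries F) :=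
  (PowerSeries.X : PowerSeries F) •
      (C.map (PowerSeries.C (R := F)) * (1 - zMat A)⁻¹ * B.map (PowerSeries.C (R := F))) +
    D.map (PowerSeries.C (R := F))

/-!
Writing `H = ∑ Hₖ zᵏ` with `H₀ = D` and `Hₖ₊₁ = C Aᵏ B`, the output of `M` at time `t` from
state `s` on input `x₀ x₁ …` is `C Aᵗ s + ∑_{d ≤ t} H_{t-d} x_d`, the `t`-th coefficient of
`C (I - Az)⁻¹ s + H(z) x(z)`. Hence `τ`-injectivity says exactly that `H u ≡ 0 mod z^(τ+1)`
forces `u ≡ 0 mod z`, which a left inverse `H' H = z^τ I` clearly implies.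

Conversely, this condition says that the `F`-linear map sending `u` to the first `τ + 1`
coefficients of `H u` has its kernel inside that of `u ↦ u(0)`, so `u(0) = ∑ₜ Kₜ [zᵗ](H u)` for
some matrices `Kₜ` over `F`. For the polynomial matrix `P = ∑ₜ z^(τ-t) Kₜ` this gives
`P H = z^τ N` with `N(0) = I`, and `H' = N⁻¹ P` works. Its entries lie in `F[z]_S`, because
that subring of `F[[z]]` contains the entries of `H` and is closed under taking inverses.
-/

open PowerSeries Polynomial Matrix

theorem LinearMap.exists_comp_eq_of_ker_le {K V W₁ W₂ : Type*} [Field K] [AddCommGroup V]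
    [Module K V] [AddCommGroup W₁] [Module K W₁] [AddCommGroup W₂] [Module K W₂]
    (f : V →ₗ[K] W₁) (g : V →ₗ[K] W₂) (h : LinearMap.ker f ≤ LinearMap.ker g) :
    ∃ ψ : W₁ →ₗ[K] W₂, ψ ∘ₗ f = g := by
  obtain ⟨ψ, hψ⟩ := LinearMap.exists_extend
    ((LinearMap.ker f).liftQ g h ∘ₗ f.quotKerEquivRange.symm.toLinearMap)
  refine ⟨ψ, LinearMap.ext fun v => ?_⟩
  have := LinearMap.congr_fun hψ ⟨f v, LinearMap.mem_range_self f v⟩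
  simpa [LinearMap.quotKerEquivRange_symm_apply_image] using this

theorem Matrix.mul_apply_mem {T : Type*} [CommRing T] (S : Subring T) {l m o : Type*}
    [Fintype m] {A : Matrix l m T} {B : Matrix m o T} (hA : ∀ i j, A i j ∈ S)
    (hB : ∀ i j, B i j ∈ S) (i : l) (k : o) : (A * B) i k ∈ S :=
  S.sum_mem fun j _ => S.mul_mem (hA i j) (hB j k)

theorem Matrix.inv_apply_mem {T : Type*} [CommRing T] (S : Subring T)
    (hS : ∀ x ∈ S, ∀ y, x * y = 1 → y ∈ S) {n : Type*} [Fintype n] [DecidableEq n]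
    {A : Matrix n n T} (hA : ∀ i j, A i j ∈ S) (i j : n) : A⁻¹ i j ∈ S := by
  set A' : Matrix n n S := Matrix.of fun i j => ⟨A i j, hA i j⟩
  have hA' : A = S.subtype.mapMatrix A' := rfl
  have hdet : A.det ∈ S := by rw [hA', ← RingHom.map_det]; exact (A'.det).2
  have hadj : A.adjugate i j ∈ S := by rw [hA', ← RingHom.map_adjugate]; exact (A'.adjugate i j).2
  rw [Matrix.inv_def, Matrix.smul_apply, smul_eq_mul]
  refine S.mul_mem ?_ hadj
  by_cases hu : IsUnit A.det
  · exact hS _ hdet _ (Ring.mul_inverse_cancel _ hu)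
  · rw [Ring.inverse_non_unit _ hu]; exact S.zero_mem

theorem Matrix.dvd_mulVec_apply {R : Type*} [CommRing R] {m ι : Type*} [Fintype ι] {c : R}
    (H : Matrix m ι R) {v : ι → R} (hv : ∀ j, c ∣ v j) (i : m) : c ∣ (H *ᵥ v) i :=
  Finset.dvd_sum fun j _ => dvd_mul_of_dvd_right (hv j) _

section RationalPowerSeries

variable {F : Type} [Field F]

/-- The image of the localization `F[X]_S → F⟦X⟧` at `S = 1 + X F[X]`. -/
def rationalPowerSeries (F : Type) [Field F] : Subring F⟦X⟧ where
  carrier := {f | ∃ p g : F[X], g.coeff 0 = 1 ∧ f * g = p}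
  zero_mem' := ⟨0, 1, by simp⟩
  one_mem' := ⟨1, 1, by simp⟩
  add_mem' := by
    rintro f₁ f₂ ⟨p₁, g₁, hg₁, h₁⟩ ⟨p₂, g₂, hg₂, h₂⟩
    refine ⟨p₁ * g₂ + p₂ * g₁, g₁ * g₂, by simp [mul_coeff_zero, hg₁, hg₂], ?_⟩
    push_cast
    linear_combination (g₂ : F⟦X⟧) * h₁ + (g₁ : F⟦X⟧) * h₂
  mul_mem' := by
    rintro f₁ f₂ ⟨p₁, g₁, hg₁, h₁⟩ ⟨p₂, g₂, hg₂, h₂⟩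
    refine ⟨p₁ * p₂, g₁ * g₂, by simp [mul_coeff_zero, hg₁, hg₂], ?_⟩
    push_cast
    linear_combination (f₂ * g₂) * h₁ + (p₁ : F⟦X⟧) * h₂
  neg_mem' := by
    rintro f ⟨p, g, hg, h⟩
    exact ⟨-p, g, hg, by push_cast; linear_combination -h⟩

theorem mem_rationalPowerSeries_iff {f : F⟦X⟧} :
    f ∈ rationalPowerSeries F ↔ ∃ p g : F[X], g.coeff 0 = 1 ∧ f = p * (g : F⟦X⟧)⁻¹ := by
  refine exists₂_congr fun p g => and_congr_right fun hg => ?_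
  rw [PowerSeries.eq_mul_inv_iff_mul_eq (by simp [hg])]

theorem coe_mem_rationalPowerSeries (p : F[X]) : (p : F⟦X⟧) ∈ rationalPowerSeries F :=
  ⟨p, 1, by simp, by simp⟩

theorem mem_rationalPowerSeries_of_mul_eq_one {f h : F⟦X⟧} (hf : f ∈ rationalPowerSeries F)
    (hfh : f * h = 1) : h ∈ rationalPowerSeries F := by
  obtain ⟨p, g, hg, hfg⟩ := hf
  have hp : p.coeff 0 = PowerSeries.constantCoeff f := by
    rw [← Polynomial.constantCoeff_coe, ← hfg, map_mul, Polynomial.constantCoeff_coe, hg, mul_one]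
  have hp0 : p.coeff 0 ≠ 0 := by
    rw [hp]
    exact left_ne_zero_of_mul_eq_one (by rw [← map_mul, hfh, map_one])
  -- `h = g / p`, normalised so that the denominator has constant term `1`
  refine ⟨Polynomial.C (p.coeff 0)⁻¹ * g, Polynomial.C (p.coeff 0)⁻¹ * p, by simp [hp0], ?_⟩
  push_cast
  linear_combination
    (PowerSeries.C (p.coeff 0)⁻¹ * g) * hfh - (PowerSeries.C (p.coeff 0)⁻¹ * h) * hfg

theorem mem_rationalPowerSeries_of_X_pow_mul_mem {f : F⟦X⟧} {k : ℕ}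
    (hf : PowerSeries.X ^ k * f ∈ rationalPowerSeries F) : f ∈ rationalPowerSeries F := by
  obtain ⟨p, g, hg, hfg⟩ := hf
  obtain ⟨q, rfl⟩ : Polynomial.X ^ k ∣ p := by
    refine Polynomial.X_pow_dvd_iff.2 fun d hd => ?_
    rw [← Polynomial.coeff_coe, ← hfg, mul_assoc, PowerSeries.coeff_X_pow_mul', if_neg (by omega)]
  refine ⟨q, g, hg, mul_left_cancel₀ (pow_ne_zero k PowerSeries.X_ne_zero) ?_⟩
  rw [← mul_assoc, hfg, Polynomial.coe_mul, Polynomial.coe_pow, Polynomial.coe_X]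

end RationalPowerSeries

section DelayInjective

variable {R : Type*} [CommRing R] {l m : Type*} [Fintype l] [Fintype m]

def Matrix.DelayInjective (H : Matrix m l R⟦X⟧) (τ : ℕ) : Prop :=
  ∀ u : l → R⟦X⟧, (∀ i, PowerSeries.X ^ (τ + 1) ∣ (H *ᵥ u) i) → ∀ j, PowerSeries.X ∣ u j

theorem Matrix.delayInjective_of_mul_eq [IsDomain R] [DecidableEq l] {H' : Matrix l m R⟦X⟧}
    {H : Matrix m l R⟦X⟧} {τ : ℕ} (h : H' * H = (PowerSeries.X ^ τ : R⟦X⟧) • 1) :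
    H.DelayInjective τ := by
  intro u hu j
  have key : (H' *ᵥ (H *ᵥ u)) j = PowerSeries.X ^ τ * u j := by
    rw [mulVec_mulVec, h, smul_mulVec, one_mulVec, Pi.smul_apply, smul_eq_mul]
  have hdvd : PowerSeries.X ^ τ * PowerSeries.X ∣ PowerSeries.X ^ τ * u j := by
    rw [← pow_succ, ← key]
    exact H'.dvd_mulVec_apply hu j
  exact (mul_dvd_mul_iff_left (pow_ne_zero τ PowerSeries.X_ne_zero)).1 hdvd

theorem Matrix.exists_eq_X_pow_smul_of_coeff_mulVec [DecidableEq l] {Q : Matrix l l R⟦X⟧}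
    {τ : ℕ} (hQ : ∀ u j, PowerSeries.coeff τ ((Q *ᵥ u) j) = PowerSeries.constantCoeff (u j)) :
    ∃ N : Matrix l l R⟦X⟧, Q = (PowerSeries.X ^ τ : R⟦X⟧) • N ∧
      N.map PowerSeries.constantCoeff = 1 := by
  have hcoeff : ∀ r ≤ τ, ∀ i j,
      PowerSeries.coeff r (Q i j) = if r = τ then (1 : Matrix l l R) i j else 0 := by
    intro r hr i j
    have := hQ (Pi.single j (PowerSeries.X ^ (τ - r))) i
    rw [mulVec_single, Pi.smul_apply, op_smul_eq_mul, col_apply, PowerSeries.coeff_mul_X_pow',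
      if_pos (Nat.sub_le τ r), Nat.sub_sub_self hr] at this
    rw [this]
    rcases eq_or_lt_of_le hr with rfl | hlt
    · simp [Pi.single_apply, one_apply]
    · simp [Pi.single_apply, apply_ite, hlt.ne, zero_pow (Nat.sub_ne_zero_of_lt hlt)]
  have hdvd : ∀ i j, PowerSeries.X ^ τ ∣ Q i j := fun i j =>
    PowerSeries.X_pow_dvd_iff.2 fun r hr => by rw [hcoeff r hr.le, if_neg hr.ne]
  choose N hN using hdvd
  refine ⟨Matrix.of N, Matrix.ext fun i j => hN i j, Matrix.ext fun i j => ?_⟩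
  have := hcoeff τ le_rfl i j
  rwa [hN i j, PowerSeries.coeff_X_pow_mul', if_pos le_rfl, Nat.sub_self, if_pos rfl,
    PowerSeries.coeff_zero_eq_constantCoeff_apply] at this

end DelayInjective

section LeftInverse

variable {F : Type} [Field F] {l m : Type*} [Fintype m]

theorem Matrix.exists_polynomial_coeff_mulVec_eq {τ : ℕ} (K : Matrix l (Fin (τ + 1) × m) F) :
    ∃ P : Matrix l m F[X], ∀ (y : m → F⟦X⟧) j, PowerSeries.coeff τ ((P.map (↑) *ᵥ y) j) =
      (K *ᵥ fun tk => PowerSeries.coeff tk.1 (y tk.2)) j := by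
  refine ⟨Matrix.of fun j i => ∑ t : Fin (τ + 1),
    Polynomial.C (K j (t, i)) * Polynomial.X ^ (τ - t), fun y j => ?_⟩
  have hsub (t : Fin (τ + 1)) : τ - (τ - t) = t := Nat.sub_sub_self (Nat.lt_succ_iff.mp t.2)
  simp only [mulVec, dotProduct, Fintype.sum_prod_type, map_apply, of_apply,
    ← Polynomial.coeToPowerSeries.ringHom_apply, map_sum, map_mul, map_pow]
  simp [Finset.sum_mul, mul_assoc, PowerSeries.coeff_X_pow_mul', hsub]
  exact Finset.sum_comm

variable [Fintype l]

noncomputable def Matrix.truncMulVec (H : Matrix m l F⟦X⟧) (τ : ℕ) :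
    (l → F⟦X⟧) →ₗ[F] (Fin (τ + 1) × m → F) where
  toFun u tk := PowerSeries.coeff tk.1 ((H *ᵥ u) tk.2)
  map_add' u v := by ext; simp [mulVec_add]
  map_smul' c u := by ext; simp [mulVec_smul]

theorem Matrix.DelayInjective.exists_polynomial_coeff_mulVec {H : Matrix m l F⟦X⟧} {τ : ℕ}
    (hH : H.DelayInjective τ) :
    ∃ P : Matrix l m F[X], ∀ u j,
      PowerSeries.coeff τ ((P.map (↑) *ᵥ (H *ᵥ u)) j) = PowerSeries.constantCoeff (u j) := by
  classical
  let g : (l → F⟦X⟧) →ₗ[F] (l → F) :=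
    LinearMap.pi fun j => (PowerSeries.coeff 0).comp (LinearMap.proj j)
  have hker : LinearMap.ker (H.truncMulVec τ) ≤ LinearMap.ker g := by
    intro u hu
    simp only [LinearMap.mem_ker, funext_iff] at hu ⊢
    intro j
    have := hH u (fun i => PowerSeries.X_pow_dvd_iff.2 fun t ht => hu (⟨t, ht⟩, i)) j
    simpa [g, PowerSeries.X_dvd_iff] using this
  obtain ⟨ψ, hψ⟩ := LinearMap.exists_comp_eq_of_ker_le _ _ hker
  obtain ⟨P, hP⟩ := exists_polynomial_coeff_mulVec_eq (LinearMap.toMatrix' ψ)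
  refine ⟨P, fun u j => ?_⟩
  rw [hP, LinearMap.toMatrix'_mulVec]
  exact (congr_fun (LinearMap.congr_fun hψ u) j).trans
    (PowerSeries.coeff_zero_eq_constantCoeff_apply _)

theorem Matrix.DelayInjective.exists_left_inverse [DecidableEq l] {H : Matrix m l F⟦X⟧}
    {τ : ℕ} (hH : H.DelayInjective τ) (hrat : ∀ i j, H i j ∈ rationalPowerSeries F) :
    ∃ H' : Matrix l m F⟦X⟧, (∀ i j, H' i j ∈ rationalPowerSeries F) ∧
      H' * H = (PowerSeries.X ^ τ : F⟦X⟧) • 1 := by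
  obtain ⟨P, hP⟩ := hH.exists_polynomial_coeff_mulVec
  have hPrat : ∀ i j, P.map (↑) i j ∈ rationalPowerSeries F := fun i j =>
    coe_mem_rationalPowerSeries (P i j)
  have hPHu : ∀ u j, PowerSeries.coeff τ ((((P.map (↑) : Matrix l m F⟦X⟧) * H) *ᵥ u) j) =
      PowerSeries.constantCoeff (u j) := fun u j => by rw [← mulVec_mulVec, hP]
  obtain ⟨N, hPH, hN⟩ := exists_eq_X_pow_smul_of_coeff_mulVec hPHu
  have hNrat : ∀ i j, N i j ∈ rationalPowerSeries F := fun i j =>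
    mem_rationalPowerSeries_of_X_pow_mul_mem (k := τ) <| by
      simpa [hPH] using mul_apply_mem _ hPrat hrat i j
  have hNunit : IsUnit N.det := by
    rw [PowerSeries.isUnit_iff_constantCoeff, RingHom.map_det, RingHom.mapMatrix_apply, hN,
      det_one]
    exact isUnit_one
  refine ⟨N⁻¹ * P.map (↑), mul_apply_mem _
    (inv_apply_mem _ (fun _ hx _ => mem_rationalPowerSeries_of_mul_eq_one hx) hNrat) hPrat, ?_⟩
  rw [Matrix.mul_assoc, hPH, Matrix.mul_smul, nonsing_inv_mul _ hNunit]

end LeftInverse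

section MatrixCoeff

variable {F : Type} [Field F] {l m n : Type*} [Fintype m]

theorem Matrix.map_coeff_map_C_mul (k : ℕ) (A : Matrix l m F) (Y : Matrix m n F⟦X⟧) :
    (A.map PowerSeries.C * Y).map (PowerSeries.coeff k) = A * Y.map (PowerSeries.coeff k) := by
  ext i j; simp [mul_apply]

theorem Matrix.map_coeff_mul_map_C (k : ℕ) (Y : Matrix l m F⟦X⟧) (A : Matrix m n F) :
    (Y * A.map PowerSeries.C).map (PowerSeries.coeff k) = Y.map (PowerSeries.coeff k) * A := by
  ext i j; simp [mul_apply]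

theorem Matrix.map_coeff_X_smul (k : ℕ) (Y : Matrix l n F⟦X⟧) :
    ((PowerSeries.X : F⟦X⟧) • Y).map (PowerSeries.coeff k) =
      if k = 0 then 0 else Y.map (PowerSeries.coeff (k - 1)) := by
  rcases k with _ | k <;> ext i j <;> simp [PowerSeries.coeff_succ_X_mul]

theorem Matrix.map_coeff_map_C (k : ℕ) (A : Matrix l n F) :
    (A.map PowerSeries.C).map (PowerSeries.coeff k) = if k = 0 then A else 0 := by
  rcases k with _ | k <;> ext i j <;> simp

theorem Matrix.map_coeff_one [DecidableEq n] (k : ℕ) :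
    (1 : Matrix n n F⟦X⟧).map (PowerSeries.coeff k) = if k = 0 then 1 else 0 := by
  rcases k with _ | k <;> ext i j <;> by_cases h : i = j <;> simp [one_apply, h]

theorem Matrix.ext_map_coeff {Y Z : Matrix l n F⟦X⟧}
    (h : ∀ k, Y.map (PowerSeries.coeff k) = Z.map (PowerSeries.coeff k)) : Y = Z :=
  Matrix.ext fun i j => PowerSeries.ext fun k => congr_fun₂ (h k) i j

end MatrixCoeff

section TransferMatrix

variable {F : Type} [Field F] {ℓ m n : ℕ}

theorem map_coeff_inv_one_sub_zMat (A : Matrix (Fin n) (Fin n) F) (k : ℕ) :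
    (1 - zMat A)⁻¹.map (PowerSeries.coeff k) = A ^ k := by
  set R : Matrix (Fin n) (Fin n) F⟦X⟧ := Matrix.of fun i j => PowerSeries.mk fun k => (A ^ k) i j
  have hR (k : ℕ) : R.map (PowerSeries.coeff k) = A ^ k := by ext; simp [R]
  suffices (1 - zMat A) * R = 1 by rw [inv_eq_right_inv this, hR]
  refine ext_map_coeff fun k => ?_
  rw [sub_mul, one_mul, zMat, smul_mul_assoc, Matrix.map_sub _ (map_sub _), map_coeff_X_smul,
    map_coeff_map_C_mul, map_coeff_one, hR, hR]
  rcases k with _ | k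
  · simp
  · simp [pow_succ']

theorem map_coeff_zero_transferMat (A : Matrix (Fin n) (Fin n) F) (B : Matrix (Fin n) (Fin ℓ) F)
    (C : Matrix (Fin m) (Fin n) F) (D : Matrix (Fin m) (Fin ℓ) F) :
    (transferMat A B C D).map (PowerSeries.coeff 0) = D := by
  rw [transferMat, Matrix.map_add _ (map_add _), map_coeff_X_smul, map_coeff_map_C]
  simp

theorem map_coeff_succ_transferMat (A : Matrix (Fin n) (Fin n) F) (B : Matrix (Fin n) (Fin ℓ) F)
    (C : Matrix (Fin m) (Fin n) F) (D : Matrix (Fin m) (Fin ℓ) F) (k : ℕ) :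
    (transferMat A B C D).map (PowerSeries.coeff (k + 1)) = C * A ^ k * B := by
  rw [transferMat, Matrix.map_add _ (map_add _), map_coeff_X_smul, map_coeff_map_C,
    map_coeff_mul_map_C, map_coeff_map_C_mul, map_coeff_inv_one_sub_zMat]
  simp

theorem transferMat_apply_mem (A : Matrix (Fin n) (Fin n) F) (B : Matrix (Fin n) (Fin ℓ) F)
    (C : Matrix (Fin m) (Fin n) F) (D : Matrix (Fin m) (Fin ℓ) F) (i : Fin m) (j : Fin ℓ) :
    transferMat A B C D i j ∈ rationalPowerSeries F := by
  have hX : (PowerSeries.X : F⟦X⟧) ∈ rationalPowerSeries F := by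
    simpa using coe_mem_rationalPowerSeries (Polynomial.X : F[X])
  have hC {a b : ℕ} (M : Matrix (Fin a) (Fin b) F) (i : Fin a) (j : Fin b) :
      M.map PowerSeries.C i j ∈ rationalPowerSeries F := by
    simpa using coe_mem_rationalPowerSeries (Polynomial.C (M i j))
  have hI : ∀ i j, (1 - zMat A) i j ∈ rationalPowerSeries F := fun i j => by
    rw [zMat, Matrix.sub_apply, Matrix.smul_apply, smul_eq_mul, one_apply]
    exact Subring.sub_mem _ (by split_ifs <;> simp) (Subring.mul_mem _ hX (hC A i j))
  have hinv := inv_apply_mem _ (fun _ hx _ => mem_rationalPowerSeries_of_mul_eq_one hx) hI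
  rw [transferMat, Matrix.add_apply, Matrix.smul_apply, smul_eq_mul]
  exact Subring.add_mem _ (Subring.mul_mem _ hX
    (mul_apply_mem _ (mul_apply_mem _ (hC C) hinv) (hC B) i j)) (hC D i j)

end TransferMatrix

section Transducer

theorem length_lambdaStar {X Y S : Type*} (δ : S → X → S) (lam : S → X → Y) :
    ∀ (s : S) (w : List X), (lambdaStar δ lam s w).length = w.length
  | _, [] => rfl
  | s, a :: w => by simp [lambdaStar, length_lambdaStar _ _ (δ s a) w]

variable {F : Type} [Field F] {ι : Type*}

noncomputable def wordSeries (w : List (ι → F)) : ι → F⟦X⟧ :=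
  fun j => PowerSeries.mk fun t => w.getD t 0 j

theorem wordSeries_cons (a : ι → F) (w : List (ι → F)) :
    wordSeries (a :: w) =
      (fun j => PowerSeries.C (a j)) + (PowerSeries.X : F⟦X⟧) • wordSeries w := by
  ext j t
  rcases t with _ | t <;> simp [wordSeries, PowerSeries.coeff_succ_X_mul]

theorem wordSeries_replicate_zero (k : ℕ) : wordSeries (List.replicate k (0 : ι → F)) = 0 := by
  ext j t
  simp [wordSeries]

theorem Matrix.coeff_mulVec_C [Fintype ι] {m : Type*} (H : Matrix m ι F⟦X⟧) (a : ι → F) (k : ℕ)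
    (i : m) : PowerSeries.coeff k ((H *ᵥ fun j => PowerSeries.C (a j)) i) =
      (H.map (PowerSeries.coeff k) *ᵥ a) i := by
  simp [mulVec, dotProduct]

variable {ℓ m n : ℕ}

theorem LFT.getD_lambdaStar (M : LFT F ℓ m n) : ∀ (w : List (Fin ℓ → F)) (s : Fin n → F) (t : ℕ),
    t < w.length → (lambdaStar M.del M.out s w).getD t 0 = M.C *ᵥ (M.A ^ t *ᵥ s) +
      fun i => PowerSeries.coeff t ((transferMat M.A M.B M.C M.D *ᵥ wordSeries w) i)
  | [], _, _, ht => absurd ht (Nat.not_lt_zero _)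
  | a :: w, s, 0, _ => by
    ext i
    simp only [lambdaStar, List.getD_cons_zero, LFT.out, wordSeries_cons, mulVec_add,
      Pi.add_apply, map_add, coeff_mulVec_C, map_coeff_zero_transferMat]
    simp [mulVec_smul]
  | a :: w, s, t + 1, ht => by
    rw [lambdaStar, List.getD_cons_succ, getD_lambdaStar M w _ t (by simpa using ht)]
    ext i
    simp [LFT.del, wordSeries_cons, mulVec_add, mulVec_smul, coeff_mulVec_C,
      map_coeff_succ_transferMat, pow_succ, mulVec_mulVec, PowerSeries.coeff_succ_X_mul,
      Matrix.mul_assoc, add_assoc]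

theorem LFT.tauInjective_of_delayInjective (M : LFT F ℓ m n) {τ : ℕ}
    (h : (transferMat M.A M.B M.C M.D).DelayInjective τ) : TauInjective M.del M.out τ := by
  intro s x x' α α' hα hα' heq
  set H := transferMat M.A M.B M.C M.D
  set u := wordSeries (x :: α) - wordSeries (x' :: α')
  have hHu (i : Fin m) : PowerSeries.X ^ (τ + 1) ∣ (H *ᵥ u) i := by
    refine PowerSeries.X_pow_dvd_iff.2 fun t ht => ?_
    have h₁ := M.getD_lambdaStar (x :: α) s t (by simp [hα]; omega)
    have h₂ := M.getD_lambdaStar (x' :: α') s t (by simp [hα']; omega)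
    rw [heq, h₂, add_right_inj] at h₁
    simpa [u, mulVec_sub, sub_eq_zero] using (congr_fun h₁ i).symm
  funext j
  simpa [u, wordSeries, sub_eq_zero, PowerSeries.X_dvd_iff] using h u hHu j

theorem LFT.delayInjective_of_tauInjective (M : LFT F ℓ m n) {τ : ℕ}
    (h : TauInjective M.del M.out τ) : (transferMat M.A M.B M.C M.D).DelayInjective τ := by
  intro u hu j
  set H := transferMat M.A M.B M.C M.D
  -- from state `0`, the word of the first `τ + 1` coefficients of `u` and the zero word
  -- have the same output
  set w : List (Fin ℓ → F) := List.ofFn fun t : Fin (τ + 1) => fun j => PowerSeries.coeff t (u j)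
  have hw (j : Fin ℓ) : PowerSeries.X ^ (τ + 1) ∣ wordSeries w j - u j :=
    PowerSeries.X_pow_dvd_iff.2 fun t ht => by
      rw [map_sub, wordSeries, PowerSeries.coeff_mk,
        List.getD_eq_getElem _ _ (by simpa [w] using ht)]
      simp [w]
  have hHw (i : Fin m) : PowerSeries.X ^ (τ + 1) ∣ (H *ᵥ wordSeries w) i := by
    rw [← sub_add_cancel (wordSeries w) u, mulVec_add]
    exact dvd_add (H.dvd_mulVec_apply hw i) (hu i)
  have hout : lambdaStar M.del M.out 0 w = lambdaStar M.del M.out 0 (List.replicate (τ + 1) 0) := by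
    refine List.ext_getElem (by simp [length_lambdaStar, w]) fun t h₁ h₂ => ?_
    rw [← List.getD_eq_getElem _ 0, ← List.getD_eq_getElem _ 0,
      M.getD_lambdaStar _ _ _ (by simpa [length_lambdaStar] using h₁),
      M.getD_lambdaStar _ _ _ (by simpa [length_lambdaStar] using h₂)]
    ext i
    have : t < τ + 1 := by simpa [length_lambdaStar, w] using h₁
    simpa [wordSeries_replicate_zero] using PowerSeries.X_pow_dvd_iff.1 (hHw i) t this
  simp only [w, List.ofFn_succ, List.replicate_succ] at hout
  have := congr_fun (h 0 _ _ _ _ (by simp) (by simp) hout) j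
  simpa [PowerSeries.X_dvd_iff] using this

end Transducer

theorem tauInjective_iff_exists_left_inverse_general {F : Type} [Field F] {ℓ m n : ℕ}
    (M : LFT F ℓ m n) (τ : ℕ) :
    TauInjective M.del M.out τ ↔
      ∃ H' : Matrix (Fin ℓ) (Fin m) (PowerSeries F),
        (∀ (i : Fin ℓ) (j : Fin m), ∃ p g : Polynomial F, g.coeff 0 = 1 ∧
            H' i j = (p : PowerSeries F) * (g : PowerSeries F)⁻¹) ∧
          H' * transferMat M.A M.B M.C M.D =
            ((PowerSeries.X : PowerSeries F) ^ τ) • (1 : Matrix (Fin ℓ) (Fin ℓ) (PowerSeries F)) := by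
  constructor
  · intro h
    obtain ⟨H', hrat, hH'⟩ :=
      (M.delayInjective_of_tauInjective h).exists_left_inverse (transferMat_apply_mem _ _ _ _)
    exact ⟨H', fun i j => mem_rationalPowerSeries_iff.1 (hrat i j), hH'⟩
  · rintro ⟨H', -, hH'⟩
    exact M.tauInjective_of_delayInjective (delayInjective_of_mul_eq hH')

/-- an LFT `M` with transfer function matrix `H` is injective with delay
`τ` if and only if there is a matrix `H' ∈ M_{ℓ×m}(F[[z]])`, all of whose entries lie in
the image of the canonical embedding `F[z]_S → F[[z]]` (with `S = 1 + zF[z]`, i.e. each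
entry is of the form `p·g⁻¹` with `p, g ∈ F[z]` and `g(0) = 1`), such that
`H'·H = z^τ·I`. -/
theorem tauInjective_iff_exists_left_inverse {F : Type} [Field F] {ℓ m n : ℕ}
    (hℓ : 0 < ℓ) (hm : 0 < m) (hn : 0 < n) (M : LFT F ℓ m n) (τ : ℕ) :
    TauInjective M.del M.out τ ↔
      ∃ H' : Matrix (Fin ℓ) (Fin m) (PowerSeries F),
        (∀ (i : Fin ℓ) (j : Fin m), ∃ p g : Polynomial F, g.coeff 0 = 1 ∧
            H' i j = (p : PowerSeries F) * (g : PowerSeries F)⁻¹) ∧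
          H' * transferMat M.A M.B M.C M.D =
            ((PowerSeries.X : PowerSeries F) ^ τ) • (1 : Matrix (Fin ℓ) (Fin ℓ) (PowerSeries F)) :=
  tauInjective_iff_exists_left_inverse_general M τ
end

section
/- Let F be a field, A ∈ M_{n×n}(F), B ∈ M_{n×ℓ}(F), C ∈ M_{m×n}(F), D ∈ M_{m×ℓ}(F), f(z) = det(I − Az), and let H be the transfer function matrix C(I − Az)^{−1}Bz + D, regarded as an m × ℓ matrix over F[z]_S (S = 1 + zF[z]), so that fH has entries in F[z]. Suppose U ∈ GL_m(F[z]) and V ∈ GL_ℓ(F[z]) satisfy U·(fH)·V = diag(d'_1, …, d'_r, 0, …, 0) with d'_i ≠ 0 and d'_i | d'_{i+1} for 1 ≤ i ≤ r−1 (a Smith normal form of fH over F[z]). Let u be the z-adic valuation of d'_r and v_i the z-adic valuation of d'_i. Then there exist P ∈ GL_m(F[z]_S) and Q ∈ GL_ℓ(F[z]_S) with P·H·Q = diag(z^{min(v_1,u)}, …, z^{min(v_r,u)}, 0, …, 0); that is, the invariant factors of H over F[z]_S are, up to units, d_i = gcd(d'_i, z^u) for 1 ≤ i ≤ r. -/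
/-- The multiplicative submonoid `S = 1 + zF[z]` of `F[z]` of polynomials with constant
term `1`. -/
def oneS (F : Type) [Field F] : Submonoid (Polynomial F) where
  carrier := {p : Polynomial F | p.coeff 0 = 1}
  one_mem' := by simp
  mul_mem' := by
    intro a b ha hb
    simp only [Set.mem_setOf_eq] at *
    rw [Polynomial.mul_coeff_zero, ha, hb, one_mul]

/-- The matrix `Az` over `F[z]` associated to a square matrix `A` over `F`. -/
noncomputable def zMatP {F : Type} [Field F] {n : ℕ} (A : Matrix (Fin n) (Fin n) F) :
    Matrix (Fin n) (Fin n) (Polynomial F) :=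
  (Polynomial.X : Polynomial F) • A.map Polynomial.C

/-- The polynomial `f(z) = det(I − Az)`. -/
noncomputable def fPoly {F : Type} [Field F] {n : ℕ} (A : Matrix (Fin n) (Fin n) F) :
    Polynomial F :=
  (1 - zMatP A).det

/-- The polynomial matrix `f·H = C·(I − Az)^⋆·B·z + f·D`. -/
noncomputable def fHMat {F : Type} [Field F] {ℓ m n : ℕ}
    (A : Matrix (Fin n) (Fin n) F) (B : Matrix (Fin n) (Fin ℓ) F)
    (C : Matrix (Fin m) (Fin n) F) (D : Matrix (Fin m) (Fin ℓ) F) :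
    Matrix (Fin m) (Fin ℓ) (Polynomial F) :=
  (Polynomial.X : Polynomial F) •
      (C.map Polynomial.C * (1 - zMatP A).adjugate * B.map Polynomial.C) +
    fPoly A • D.map Polynomial.C

lemma fPoly_mem_oneS {F : Type} [Field F] {n : ℕ} (A : Matrix (Fin n) (Fin n) F) :
    fPoly A ∈ oneS F := by
  show (fPoly A).coeff 0 = 1
  rw [Polynomial.coeff_zero_eq_eval_zero]
  have h1 : Polynomial.eval 0 (fPoly A) =
      ((Polynomial.evalRingHom (0 : F)).mapMatrix (1 - zMatP A)).det :=
    RingHom.map_det (Polynomial.evalRingHom (0 : F)) (1 - zMatP A)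
  have h2 : (Polynomial.evalRingHom (0 : F)).mapMatrix (1 - zMatP A) = 1 := by
    ext i j
    by_cases hij : i = j <;>
      simp [zMatP, Matrix.one_apply, Matrix.sub_apply, Matrix.smul_apply, smul_eq_mul,
        Matrix.map_apply, hij]
  rw [h1, h2, Matrix.det_one]

/-- The transfer function matrix `H(z) = C(I − Az)⁻¹Bz + D` of an LFT, regarded as a
matrix over the localization `F[z]_S` (`S = 1 + zF[z]`): its `(i,j)` entry is the
fraction `(f·H)_{ij} / f` with `f = det(I − Az) ∈ S`. -/
noncomputable def transferMatLoc {F : Type} [Field F] {ℓ m n : ℕ}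
    (A : Matrix (Fin n) (Fin n) F) (B : Matrix (Fin n) (Fin ℓ) F)
    (C : Matrix (Fin m) (Fin n) F) (D : Matrix (Fin m) (Fin ℓ) F) :
    Matrix (Fin m) (Fin ℓ) (Localization (oneS F)) :=
  Matrix.of fun i j => Localization.mk (fHMat A B C D i j) ⟨fPoly A, fPoly_mem_oneS A⟩

lemma isUnit_loc_of_coeff_zero_ne_zero {F : Type} [Field F] {p : Polynomial F}
    (hp : p.coeff 0 ≠ 0) :
    IsUnit (algebraMap (Polynomial F) (Localization (oneS F)) p) := by
  have hmem : ((p.coeff 0)⁻¹ • p) ∈ oneS F := by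
    show ((p.coeff 0)⁻¹ • p).coeff 0 = 1
    rw [Polynomial.coeff_smul, smul_eq_mul, inv_mul_cancel₀ hp]
  have hfac : p = Polynomial.C (p.coeff 0) * ((p.coeff 0)⁻¹ • p) := by
    rw [Polynomial.C_mul', smul_smul, mul_inv_cancel₀ hp, one_smul]
  rw [hfac, map_mul]
  exact ((Polynomial.isUnit_C.mpr hp.isUnit).map _).mul
    (IsLocalization.map_units (Localization (oneS F)) ⟨_, hmem⟩)

/-- suppose `U·(fH)·V = diag(d'₁, …, d'_r, 0, …, 0)` is a Smith normal form
of `f·H` over `F[z]` (`U, V` invertible over `F[z]`, `d'ᵢ ≠ 0`, `d'ᵢ ∣ d'ᵢ₊₁`), let `u`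
be the `z`-adic valuation of `d'_r` and `vᵢ` the `z`-adic valuation of `d'ᵢ`. Then `H`,
regarded as a matrix over `F[z]_S` (`S = 1 + zF[z]`), has Smith normal form
`P·H·Q = diag(z^{min(v₁,u)}, …, z^{min(v_r,u)}, 0, …, 0)` over `F[z]_S`; that is, the
invariant factors of `H` are, up to units, `dᵢ = gcd(d'ᵢ, z^u)`. -/
theorem snf_of_transferMatLoc {F : Type} [Field F] {ℓ m n : ℕ}
    (hℓ : 0 < ℓ) (hm : 0 < m) (hn : 0 < n)
    (A : Matrix (Fin n) (Fin n) F) (B : Matrix (Fin n) (Fin ℓ) F)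
    (C : Matrix (Fin m) (Fin n) F) (D : Matrix (Fin m) (Fin ℓ) F)
    (r : ℕ) (hr : 0 < r) (hrm : r ≤ m) (hrℓ : r ≤ ℓ)
    (U : Matrix (Fin m) (Fin m) (Polynomial F)) (V : Matrix (Fin ℓ) (Fin ℓ) (Polynomial F))
    (hU : IsUnit U.det) (hV : IsUnit V.det)
    (d : Fin r → Polynomial F) (hd0 : ∀ i, d i ≠ 0)
    (hdvd : ∀ (i : Fin r) (h : (i : ℕ) + 1 < r), d i ∣ d ⟨(i : ℕ) + 1, h⟩)
    (hsnf : U * fHMat A B C D * V = Matrix.of (fun (i : Fin m) (j : Fin ℓ) =>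
      if h : (i : ℕ) = (j : ℕ) ∧ (i : ℕ) < r then d ⟨(i : ℕ), h.2⟩ else 0))
    (u : ℕ) (hu : u = Polynomial.rootMultiplicity 0 (d ⟨r - 1, by omega⟩)) :
    ∃ (P : Matrix (Fin m) (Fin m) (Localization (oneS F)))
      (Q : Matrix (Fin ℓ) (Fin ℓ) (Localization (oneS F))),
      IsUnit P.det ∧ IsUnit Q.det ∧
        P * transferMatLoc A B C D * Q = Matrix.of (fun (i : Fin m) (j : Fin ℓ) =>
          if h : (i : ℕ) = (j : ℕ) ∧ (i : ℕ) < r then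
            algebraMap (Polynomial F) (Localization (oneS F)) Polynomial.X ^
              min (Polynomial.rootMultiplicity 0 (d ⟨(i : ℕ), h.2⟩)) u
          else 0) := by
  classical
  set L := Localization (oneS F)
  set φ : Polynomial F →+* L := algebraMap (Polynomial F) L with hφ
  set f := fPoly A with hfdef
  have hfU : IsUnit (φ f) := IsLocalization.map_units L ⟨f, fPoly_mem_oneS A⟩
  set g : L := ↑hfU.unit⁻¹ with hg
  have hgf : g * φ f = 1 := hfU.val_inv_mul
  -- valuations and unit parts
  set v : Fin r → ℕ := fun i => Polynomial.rootMultiplicity 0 (d i) with hv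
  set w : Fin r → Polynomial F :=
    fun i => d i /ₘ (Polynomial.X - Polynomial.C 0) ^ v i with hw
  have hdw : ∀ i, Polynomial.X ^ v i * w i = d i := by
    intro i
    have := Polynomial.pow_mul_divByMonic_rootMultiplicity_eq (d i) 0
    simpa [hw, hv] using this
  have hw0 : ∀ i, (w i).coeff 0 ≠ 0 := by
    intro i
    have := Polynomial.eval_divByMonic_pow_rootMultiplicity_ne_zero 0 (hd0 i)
    simpa [Polynomial.coeff_zero_eq_eval_zero, hw, hv] using this
  have hwU : ∀ i, IsUnit (φ (w i)) := fun i => isUnit_loc_of_coeff_zero_ne_zero (hw0 i)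
  have hwinv : ∀ i, φ (w i) * ↑(hwU i).unit⁻¹ = 1 := fun i => (hwU i).mul_val_inv
  -- divisibility chain and v i ≤ u
  have hchain : ∀ i : Fin r, d i ∣ d ⟨r - 1, by omega⟩ := by
    intro i
    have key : ∀ k (h : (i : ℕ) + k < r), d i ∣ d ⟨(i : ℕ) + k, h⟩ := by
      intro k
      induction k with
      | zero =>
        intro h
        have : (⟨(i : ℕ) + 0, h⟩ : Fin r) = i := Fin.ext (by show (i:ℕ) + 0 = (i:ℕ); omega)
        rw [this]
      | succ k ih =>
        intro h
        have h' : (i : ℕ) + k < r := by omega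
        refine (ih h').trans ?_
        have := hdvd ⟨(i : ℕ) + k, h'⟩ (by show (i:ℕ) + k + 1 < r; omega)
        have heq : (⟨(i : ℕ) + k + 1, by omega⟩ : Fin r) = ⟨(i : ℕ) + (k + 1), h⟩ :=
          Fin.ext (by show (i:ℕ) + k + 1 = (i:ℕ) + (k + 1); omega)
        rwa [heq] at this
    have hi : (i : ℕ) + (r - 1 - (i : ℕ)) < r := by omega
    have := key (r - 1 - (i : ℕ)) hi
    have heq : (⟨(i : ℕ) + (r - 1 - (i : ℕ)), hi⟩ : Fin r) = ⟨r - 1, by omega⟩ :=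
      Fin.ext (by show (i:ℕ) + (r - 1 - (i:ℕ)) = r - 1; have := i.isLt; omega)
    rwa [heq] at this
  have hvu : ∀ i, v i ≤ u := by
    intro i
    rw [hu, Polynomial.le_rootMultiplicity_iff (hd0 _)]
    exact dvd_trans (by simpa [hv] using Polynomial.pow_rootMultiplicity_dvd (d i) 0) (hchain i)
  -- the diagonal correction matrix
  set e : Fin ℓ → L :=
    fun j => if h : (j : ℕ) < r then φ f * ↑(hwU ⟨j, h⟩).unit⁻¹ else 1 with he
  have heU : ∀ j, IsUnit (e j) := by
    intro j
    show IsUnit (if h : (j : ℕ) < r then φ f * ↑(hwU ⟨j, h⟩).unit⁻¹ else 1)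
    by_cases h : (j : ℕ) < r
    · rw [dif_pos h]; exact hfU.mul (Units.isUnit _)
    · rw [dif_neg h]; exact isUnit_one
  refine ⟨U.map φ, V.map φ * Matrix.diagonal e, ?_, ?_, ?_⟩
  · rw [← RingHom.mapMatrix_apply, ← RingHom.map_det]
    exact hU.map φ
  · rw [Matrix.det_mul, Matrix.det_diagonal, ← RingHom.mapMatrix_apply, ← RingHom.map_det]
    exact (hV.map φ).mul
      (Finset.prod_induction e IsUnit (fun _ _ => IsUnit.mul) isUnit_one fun j _ => heU j)
  · -- main computation
    have hT : transferMatLoc A B C D = g • (fHMat A B C D).map φ := by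
      ext i j
      show Localization.mk (fHMat A B C D i j) ⟨f, fPoly_mem_oneS A⟩ =
        g * φ (fHMat A B C D i j)
      rw [hg, Units.eq_inv_mul_iff_mul_eq, hfU.unit_spec, Localization.mk_eq_mk']
      exact IsLocalization.mk'_spec' L (fHMat A B C D i j) ⟨f, fPoly_mem_oneS A⟩
    rw [hT, Matrix.mul_smul, Matrix.smul_mul, ← Matrix.mul_assoc, ← Matrix.map_mul,
      ← Matrix.map_mul, hsnf]
    ext i j
    rw [Matrix.smul_apply, Matrix.mul_diagonal, Matrix.map_apply, smul_eq_mul]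
    show g * (φ (if h : (i : ℕ) = (j : ℕ) ∧ (i : ℕ) < r then d ⟨(i : ℕ), h.2⟩ else 0) * e j) =
      _
    rw [Matrix.of_apply]
    by_cases h : (i : ℕ) = (j : ℕ) ∧ (i : ℕ) < r
    · rw [dif_pos h, dif_pos h]
      have hjr : (j : ℕ) < r := h.1 ▸ h.2
      have hij : (⟨(j : ℕ), hjr⟩ : Fin r) = ⟨(i : ℕ), h.2⟩ := Fin.ext h.1.symm
      rw [he]
      simp only [dif_pos hjr, hij]
      rw [min_eq_left (hvu ⟨(i : ℕ), h.2⟩)]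
      calc g * (φ (d ⟨(i : ℕ), h.2⟩) * (φ f * ↑(hwU ⟨(i : ℕ), h.2⟩).unit⁻¹))
          = φ Polynomial.X ^ v ⟨(i : ℕ), h.2⟩ *
            ((g * φ f) * (φ (w ⟨(i : ℕ), h.2⟩) * ↑(hwU ⟨(i : ℕ), h.2⟩).unit⁻¹)) := by
            rw [← hdw ⟨(i : ℕ), h.2⟩, map_mul, map_pow]; ring
        _ = φ Polynomial.X ^ v ⟨(i : ℕ), h.2⟩ := by
            rw [hgf, hwinv, mul_one, mul_one]
        _ = _ := by rw [hv]
    · rw [dif_neg h, dif_neg h, map_zero, zero_mul, mul_zero]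
end

section
/- Let ℓ, m be positive integers. The number of canonical linear finite transducers over F_2 with structural parameters ℓ, m, 1 (i.e., of size n = 1) equals (2^m − 1)·2^{ℓ(m+1)+1}. -/
/-- The number of canonical linear finite transducers over `F₂` with structural
parameters `ℓ, m, i`. -/
noncomputable def CT (ℓ m i : ℕ) : ℕ :=
  Nat.card {M : LFT (ZMod 2) ℓ m i // M.IsCanonical}

lemma diag_eq_size_one {F : Type} [Field F] {ℓ m : ℕ} (M : LFT F ℓ m 1)
    (r : Fin (1 * m)) (j : Fin 1) :
    M.diagMat r j = M.C (Fin.cast (one_mul m) r) j := by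
  have hr : (r : ℕ) < m := by have := r.isLt; omega
  have hdiv : (r : ℕ) / m = 0 := Nat.div_eq_of_lt hr
  have hmod : (r : ℕ) % m = (r : ℕ) := Nat.mod_eq_of_lt hr
  simp only [LFT.diagMat, Matrix.of_apply, hdiv, pow_zero, Matrix.mul_one]
  congr 1
  exact Fin.ext hmod

lemma canonical_iff_size_one {ℓ m : ℕ} (hm : 0 < m) (M : LFT (ZMod 2) ℓ m 1) :
    M.IsCanonical ↔ M.C ≠ 0 := by
  classical
  have hone : ∀ x : ZMod 2, x ≠ 0 → x = 1 := by decide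
  constructor
  · rintro ⟨h1, -⟩ hC
    rw [linearIndependent_unique_iff] at h1
    apply h1
    funext r
    rw [show (default : Fin 1) = 0 from rfl, diag_eq_size_one, hC]
    simp
  · intro hC
    set v : Fin (1 * m) → ZMod 2 := fun r => M.diagMat r 0 with hv
    have hvC : ∀ r, v r = M.C (Fin.cast (one_mul m) r) 0 := fun r => diag_eq_size_one M r 0
    have hex : ∃ k, ∃ h : k < 1 * m, v ⟨k, h⟩ ≠ 0 := by
      by_contra h
      push_neg at h
      apply hC
      ext i j
      have hj : j = 0 := Subsingleton.elim _ _
      have hi : (i : ℕ) < 1 * m := by have := i.isLt; omega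
      have := h i hi
      rw [hvC] at this
      have : M.C (Fin.cast (one_mul m) ⟨(i : ℕ), hi⟩) 0 = 0 := this
      simpa [hj, Fin.ext_iff] using this
    set k := Nat.find hex with hk
    obtain ⟨hklt, hkne⟩ := Nat.find_spec hex
    refine ⟨?_, ⟨fun _ => ⟨k, hklt⟩, ?_, ?_, ?_⟩⟩
    · rw [linearIndependent_unique_iff]
      intro h0
      apply hkne
      have : v ⟨k, hklt⟩ = (fun r : Fin (1 * m) =>
          M.diagMat r (default : Fin 1)) ⟨k, hklt⟩ := rfl
      rw [this, h0]
      rfl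
    · intro a b hab
      exact absurd (Subsingleton.elim a b) (ne_of_lt hab)
    · intro i i'
      have hi : i = 0 := Subsingleton.elim _ _
      have hi' : i' = 0 := Subsingleton.elim _ _
      subst hi; subst hi'
      simp only [if_pos rfl]
      exact hone _ hkne
    · intro i c hc
      have hi : i = 0 := Subsingleton.elim _ _
      subst hi
      have hmin := Nat.find_min hex (m := (c : ℕ)) hc
      push_neg at hmin
      have h0 := hmin c.isLt
      show v c = 0
      simpa using h0

/-- the number of canonical LFTs over `F₂` with structural parameters
`ℓ, m, 1` equals `(2^m − 1) · 2^{ℓ(m+1)+1}`. -/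
theorem count_canonical_size_one (ℓ m : ℕ) (hℓ : 0 < ℓ) (hm : 0 < m) :
    CT ℓ m 1 = (2 ^ m - 1) * 2 ^ (ℓ * (m + 1) + 1) := by
  classical
  have e : {M : LFT (ZMod 2) ℓ m 1 // M.IsCanonical} ≃
      {C : Matrix (Fin m) (Fin 1) (ZMod 2) // C ≠ 0} ×
        Matrix (Fin 1) (Fin 1) (ZMod 2) × Matrix (Fin 1) (Fin ℓ) (ZMod 2) ×
        Matrix (Fin m) (Fin ℓ) (ZMod 2) :=
    { toFun := fun M => (⟨M.1.C, (canonical_iff_size_one hm M.1).mp M.2⟩, M.1.A, M.1.B, M.1.D)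
      invFun := fun x => ⟨⟨x.2.1, x.2.2.1, x.1.1, x.2.2.2⟩,
        (canonical_iff_size_one hm _).mpr x.1.2⟩
      left_inv := by rintro ⟨⟨A, B, C, D⟩, h⟩; rfl
      right_inv := by rintro ⟨⟨C, h⟩, A, B, D⟩; rfl }
  rw [CT, Nat.card_congr e, Nat.card_prod, Nat.card_prod, Nat.card_prod]
  have h1 : Nat.card {C : Matrix (Fin m) (Fin 1) (ZMod 2) // C ≠ 0} = 2 ^ m - 1 := by
    rw [Nat.card_eq_fintype_card]
    have : Fintype.card {C : Matrix (Fin m) (Fin 1) (ZMod 2) // ¬C = 0} =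
        Fintype.card (Matrix (Fin m) (Fin 1) (ZMod 2)) -
          Fintype.card {C : Matrix (Fin m) (Fin 1) (ZMod 2) // C = 0} :=
      Fintype.card_subtype_compl _
    rw [Fintype.card_congr (Equiv.subtypeEquivRight
      (fun C : Matrix (Fin m) (Fin 1) (ZMod 2) => Iff.rfl :
        ∀ C : Matrix (Fin m) (Fin 1) (ZMod 2), C ≠ 0 ↔ ¬C = 0)), this,
      Fintype.card_subtype_eq]
    congr 1
    show Fintype.card (Fin m → Fin 1 → ZMod 2) = 2 ^ m
    simp [Fintype.card_fun]
  have h2 : Nat.card (Matrix (Fin 1) (Fin 1) (ZMod 2)) = 2 := by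
    rw [Nat.card_eq_fintype_card]
    show Fintype.card (Fin 1 → Fin 1 → ZMod 2) = 2
    simp [Fintype.card_fun]
  have h3 : Nat.card (Matrix (Fin 1) (Fin ℓ) (ZMod 2)) = 2 ^ ℓ := by
    rw [Nat.card_eq_fintype_card]
    show Fintype.card (Fin 1 → Fin ℓ → ZMod 2) = 2 ^ ℓ
    simp [Fintype.card_fun]
  have h4 : Nat.card (Matrix (Fin m) (Fin ℓ) (ZMod 2)) = 2 ^ (ℓ * m) := by
    rw [Nat.card_eq_fintype_card]
    show Fintype.card (Fin m → Fin ℓ → ZMod 2) = 2 ^ (ℓ * m)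
    simp [Fintype.card_fun, pow_mul]
  rw [h1, h2, h3, h4]
  congr 1
  rw [show ℓ * (m + 1) + 1 = 1 + (ℓ + ℓ * m) by ring, pow_add, pow_add]
  ring
end
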